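/- arXiv:0810.2249 — 7 statements merged into one kernel-verified Lean document; each statement's English description precedes it below -/
import Mathlib

section
/- For every real θ with 0 < θ < 1/e and every ε > 0, there exists a polynomial P_ε with nonnegative real coefficients such that for all real x with 0 < x < ρ_a, A(x) ≤ f(x) + |s|(1+ε)·x·A′(θx)·A(x) + |s|·( A(θ^θ x)² + θ^θ·x·A(θ^θ x)·A′(θ^θ x) ) + P_ε(x), where A′ denotes the termwise derivative of the power series A; the middle expression |s|·(A(θ^θ x)² + θ^θ x A(θ^θ x) A′(θ^θ x)) equals (|s|/(2x))·(d/dx)(x² A(θ^θ x)²). (All series appearing converge since θx and θ^θ x lie in (0, ρ_a).) -/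
/-!
With `b n = p n / n!` and `w j = |s| j - sign s ≤ |s| (1 + j)`, the coefficients satisfy
`a n = b n + ∑_{0<j<n} w j a j a (n-j) / C(n,j)`; pair the terms `j` and `n - j`.
If `j ≤ θ n`, then `C(n,j) ≥ (n/j)^j` gives `j θ^(j-1) C(n,j) ≥ n`, so once `n + 2 ≤ (1+ε) n`
the pair is at most `|s| (1+ε) j θ^(j-1) a j a (n-j)`. If `j` and `n - j` both exceed `θ n`,
the method of types gives `C(n,j) ≥ exp (n H(j/n)) / (n+1) ≥ exp (n H(θ)) / (n+1)` for the
binary entropy `H`, and since `H(θ) > θ log θ⁻¹` this beats `θ^(-θ n)` for large `n`; the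
term is then at most `|s| (1+j) a j a (n-j) (θ^θ)^n`. Multiplied by `x^n` and summed, the two
convolutions become `x A'(θx) A(x)` and `A(qx)² + qx A(qx) A'(qx)` with `q = θ^θ`; the
finitely many remaining coefficients make up the polynomial, a truncation of `A`.
-/

open scoped BigOperators ENNReal NNReal

/-- The radius of convergence of the power series with real coefficients `c`. -/
noncomputable def seriesRadius (c : ℕ → ℝ) : ℝ≥0∞ :=
  ⨆ (r : ℝ≥0) (_ : Summable fun n => |c n| * (r : ℝ) ^ n), (r : ℝ≥0∞)

open Finset Filter Real
open scoped Nat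

namespace Nat

theorem pow_le_pow_mul_choose {n i : ℕ} (h : i ≤ n) : n ^ i ≤ i ^ i * n.choose i := by
  have key : n ^ i * i ! ≤ i ^ i * n.descFactorial i :=
    calc n ^ i * i ! = ∏ m ∈ range i, n * (i - m) := by
          rw [prod_mul_distrib, prod_const, card_range, ← descFactorial_eq_prod_range,
            descFactorial_self]
      _ ≤ ∏ m ∈ range i, i * (n - m) := prod_le_prod' fun m _ => by
          rw [Nat.mul_sub, Nat.mul_sub, Nat.mul_comm n i]
          exact Nat.sub_le_sub_left (Nat.mul_le_mul_right m h) _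
      _ = i ^ i * n.descFactorial i := by
          rw [prod_mul_distrib, prod_const, card_range, descFactorial_eq_prod_range]
  rw [descFactorial_eq_factorial_mul_choose, Nat.mul_comm (i !), ← Nat.mul_assoc] at key
  exact Nat.le_of_mul_le_mul_right key (factorial_pos i)

theorem choose_mul_pow_mul_pow_le {n i k : ℕ} (hi : i ≤ n) (hk : k ≤ n) :
    n.choose k * i ^ k * (n - i) ^ (n - k) ≤ n.choose i * i ^ i * (n - i) ^ (n - i) := by
  set T : ℕ → ℕ := fun k => n.choose k * i ^ k * (n - i) ^ (n - k)
  have ratio : ∀ k < n, T (k + 1) * ((k + 1) * (n - i)) = T k * ((n - k) * i) := by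
    intro k hk
    obtain ⟨m, rfl⟩ := Nat.exists_eq_add_of_lt hk
    have hC := choose_succ_right_eq (k + m + 1) k
    simp only [T, show k + m + 1 - (k + 1) = m by omega, show k + m + 1 - k = m + 1 by omega]
      at hC ⊢
    calc _ = (k + m + 1).choose (k + 1) * (k + 1) * i ^ (k + 1) * (k + m + 1 - i) ^ (m + 1) := by
          ring
      _ = _ := by rw [hC]; ring
  have up : MonotoneOn T (Set.Iic i) := by
    refine monotoneOn_of_le_succ Set.ordConnected_Iic fun k _ _ hk => ?_
    simp only [Order.succ_eq_add_one, Set.mem_Iic] at hk ⊢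
    have hpos : 0 < (n - k) * i := Nat.mul_pos (by omega) (by omega)
    refine Nat.le_of_mul_le_mul_right ?_ hpos
    rw [← ratio k (by omega)]
    refine Nat.mul_le_mul_left _ ?_
    zify [hi, show k ≤ n by omega]
    nlinarith
  have down : AntitoneOn T (Set.Icc i n) := by
    refine antitoneOn_of_succ_le Set.ordConnected_Icc fun k _ hk hk' => ?_
    simp only [Order.succ_eq_add_one, Set.mem_Icc] at hk hk' ⊢
    have hpos : 0 < (k + 1) * (n - i) := Nat.mul_pos (by omega) (by omega)
    refine Nat.le_of_mul_le_mul_right ?_ hpos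
    rw [ratio k (by omega)]
    refine Nat.mul_le_mul_left _ ?_
    zify [hi, show k ≤ n by omega]
    nlinarith
  rcases le_total k i with hki | hik
  · exact up (Set.mem_Iic.2 hki) (Set.mem_Iic.2 le_rfl) hki
  · exact down ⟨le_rfl, hi⟩ ⟨hik, hk⟩ hik

theorem pow_self_le_succ_mul_choose_mul_pow_mul_pow {n i : ℕ} (hi : i ≤ n) :
    n ^ n ≤ (n + 1) * (n.choose i * i ^ i * (n - i) ^ (n - i)) :=
  calc n ^ n = ∑ k ∈ range (n + 1), n.choose k * i ^ k * (n - i) ^ (n - k) := by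
        rw [← Nat.add_sub_cancel' hi, add_pow, Nat.add_sub_cancel' hi]
        exact sum_congr rfl fun k _ => by rw [Nat.cast_id]; ring
    _ ≤ ∑ _k ∈ range (n + 1), n.choose i * i ^ i * (n - i) ^ (n - i) :=
        sum_le_sum fun k hk => choose_mul_pow_mul_pow_le hi (mem_range_succ_iff.1 hk)
    _ = _ := by rw [sum_const, card_range, smul_eq_mul]

end Nat

theorem le_mul_pow_mul_choose {θ : ℝ} {n i : ℕ} (hi : 1 ≤ i) (hin : i ≤ n)
    (hiθ : (i : ℝ) ≤ θ * n) : (n : ℝ) ≤ i * θ ^ (i - 1) * n.choose i := by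
  obtain ⟨k, rfl⟩ := Nat.exists_eq_add_of_le' hi
  have hθ : 0 ≤ θ := by
    push_cast at hiθ
    nlinarith [(n.cast_nonneg : (0 : ℝ) ≤ n), (k.cast_nonneg : (0 : ℝ) ≤ k)]
  have hC : (n : ℝ) ^ (k + 1) ≤ (k + 1 : ℝ) ^ (k + 1) * n.choose (k + 1) := by
    exact_mod_cast Nat.pow_le_pow_mul_choose hin
  have hk : ((k + 1 : ℕ) : ℝ) ^ k ≤ (θ * n) ^ k := pow_le_pow_left₀ (by positivity) hiθ k
  refine le_of_mul_le_mul_left ?_ (by positivity : (0 : ℝ) < ((k + 1 : ℕ) : ℝ) ^ k)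
  push_cast at hk ⊢
  calc ((k : ℝ) + 1) ^ k * n ≤ (θ * n) ^ k * n := by gcongr
    _ = θ ^ k * n ^ (k + 1) := by ring
    _ ≤ θ ^ k * ((k + 1 : ℝ) ^ (k + 1) * n.choose (k + 1)) := by gcongr
    _ = _ := by ring

theorem exp_mul_binEntropy_mul_pow_mul_pow {n i : ℕ} (hi : 0 < i) (hin : i < n) :
    exp (n * binEntropy (i / n)) * ((i : ℝ) ^ i * ((n - i : ℕ) : ℝ) ^ (n - i)) =
      (n : ℝ) ^ n := by
  have hi' : (0 : ℝ) < i := by exact_mod_cast hi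
  have hni : (0 : ℝ) < (n - i : ℕ) := by exact_mod_cast Nat.sub_pos_of_lt hin
  have hn : (n : ℝ) = i + (n - i : ℕ) := by rw [Nat.cast_sub hin.le]; ring
  have hH : (n : ℝ) * binEntropy (i / n) =
      i * log (n / i) + (n - i : ℕ) * log (n / (n - i : ℕ)) := by
    rw [binEntropy, inv_div, show (1 - (i : ℝ) / n)⁻¹ = n / (n - i : ℕ) by
      rw [hn]; field_simp [hni.ne']; ring]
    rw [show (1 - (i : ℝ) / n) = (n - i : ℕ) / n by rw [hn]; field_simp; ring]
    rw [hn]; field_simp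
  have hn0 : (0 : ℝ) < n := by rw [hn]; positivity
  rw [hH, exp_add, exp_nat_mul, exp_nat_mul, exp_log (by positivity), exp_log (by positivity),
    div_pow, div_pow]
  field_simp
  rw [← pow_add, Nat.add_sub_cancel' hin.le]

theorem exp_mul_binEntropy_le_succ_mul_choose {n i : ℕ} (hi : 0 < i) (hin : i < n) :
    exp (n * binEntropy (i / n)) ≤ (n + 1) * n.choose i := by
  have hpos : (0 : ℝ) < (i : ℝ) ^ i * ((n - i : ℕ) : ℝ) ^ (n - i) := by
    have : 0 < n - i := Nat.sub_pos_of_lt hin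
    positivity
  refine le_of_mul_le_mul_right ?_ hpos
  rw [exp_mul_binEntropy_mul_pow_mul_pow hi hin]
  exact_mod_cast (Nat.pow_self_le_succ_mul_choose_mul_pow_mul_pow hin.le).trans_eq (by ring)

theorem one_le_choose_mul_rpow_pow {θ : ℝ} (hθ : 0 < θ) {n j : ℕ} (hj : θ * n ≤ j)
    (hnj : θ * n ≤ n - j) (hn : (n + 1 : ℝ) ≤ exp (n * binEntropy θ) * (θ ^ θ) ^ n) :
    1 ≤ n.choose j * (θ ^ θ) ^ n := by
  rcases Nat.eq_zero_or_pos n with rfl | hn0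
  · obtain rfl : j = 0 := by
      exact_mod_cast (show (j : ℝ) ≤ 0 by simpa using hnj).antisymm j.cast_nonneg
    simp
  have hn0' : (0 : ℝ) < n := by exact_mod_cast hn0
  have hθn : 0 < θ * n := by positivity
  have hj0 : 0 < j := by exact_mod_cast hθn.trans_le hj
  have hjn : j < n := by exact_mod_cast (show (j : ℝ) < n by linarith)
  have hβ : (j : ℝ) / n ∈ segment ℝ θ (1 - θ) := by
    rw [segment_eq_Icc (by nlinarith)]
    constructor
    · rwa [le_div_iff₀ hn0']
    · rw [div_le_iff₀ hn0']; linarith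
  have hH : binEntropy θ ≤ binEntropy (j / n) := by
    have hθ1 : θ ≤ 1 := by nlinarith
    simpa using strictConcave_binEntropy.concaveOn.ge_on_segment
      ⟨hθ.le, hθ1⟩ ⟨by linarith, by linarith⟩ hβ
  refine le_of_mul_le_mul_left ?_ (show (0 : ℝ) < n + 1 by positivity)
  calc (n + 1 : ℝ) * 1 ≤ exp (n * binEntropy θ) * (θ ^ θ) ^ n := by rw [mul_one]; exact hn
    _ ≤ exp (n * binEntropy (j / n)) * (θ ^ θ) ^ n := by gcongr
    _ ≤ (n + 1) * n.choose j * (θ ^ θ) ^ n := by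
        gcongr; exact exp_mul_binEntropy_le_succ_mul_choose hj0 hjn
    _ = _ := by ring

theorem eventually_add_one_le_exp_mul {c : ℝ} (hc : 0 < c) :
    ∀ᶠ n : ℕ in atTop, (n + 1 : ℝ) ≤ exp (n * c) := by
  filter_upwards [eventually_ge_atTop ⌈2 / c ^ 2⌉₊] with n hn
  have hn' : 2 ≤ n * c ^ 2 := by
    have := (div_le_iff₀ (by positivity)).1 (Nat.ceil_le.1 hn)
    linarith
  have := quadratic_le_exp_of_nonneg (by positivity : 0 ≤ (n : ℝ) * c)
  nlinarith [(n.cast_nonneg : (0 : ℝ) ≤ n)]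

theorem eventually_add_one_le_exp_mul_binEntropy_mul_rpow_pow {θ : ℝ} (hθ0 : 0 < θ)
    (hθ1 : θ < 1) :
    ∀ᶠ n : ℕ in atTop, (n + 1 : ℝ) ≤ exp (n * binEntropy θ) * (θ ^ θ) ^ n := by
  have hc : 0 < (1 - θ) * log (1 - θ)⁻¹ :=
    mul_pos (by linarith) (log_pos ((one_lt_inv₀ (by linarith)).2 (by linarith)))
  filter_upwards [eventually_add_one_le_exp_mul hc] with n hn
  rw [rpow_def_of_pos hθ0, ← exp_nat_mul, ← exp_add]
  convert hn using 2
  rw [binEntropy, log_inv]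
  ring

theorem sum_Ico_le_sum_Ico_of_add_reflect_le {f g : ℕ → ℝ} {n : ℕ}
    (h : ∀ j ∈ Ico 1 n, f j + f (n - j) ≤ g j + g (n - j)) :
    ∑ j ∈ Ico 1 n, f j ≤ ∑ j ∈ Ico 1 n, g j := by
  have reflect (u : ℕ → ℝ) : ∑ j ∈ Ico 1 n, u (n - j) = ∑ j ∈ Ico 1 n, u j := by
    rcases Nat.eq_zero_or_pos n with rfl | hn
    · simp
    · rw [sum_Ico_reflect u 1 (by omega), Nat.add_sub_cancel_left, Nat.add_sub_cancel]
  have := sum_le_sum h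
  rw [sum_add_distrib, sum_add_distrib, reflect, reflect] at this
  linarith

noncomputable def weightedConvolution (w a : ℕ → ℝ) (n : ℕ) : ℝ :=
  ∑ j ∈ Ico 1 n, w j * a j * a (n - j) / n.choose j

noncomputable def derivConvolution (a : ℕ → ℝ) (θ : ℝ) (n : ℕ) : ℝ :=
  ∑ i ∈ range (n + 1), i * a i * θ ^ (i - 1) * a (n - i)

noncomputable def succConvolution (a : ℕ → ℝ) (n : ℕ) : ℝ :=
  ∑ i ∈ range (n + 1), (1 + i) * a i * a (n - i)

section Recursion

variable {a b w : ℕ → ℝ}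

theorem div_factorial_recursion {p γ : ℕ → ℝ}
    (hγ : ∀ n, 1 ≤ n → γ n = p n + ∑ j ∈ Ico 1 n, w j * γ j * γ (n - j))
    (ha : ∀ n, a n = if n = 0 then 0 else γ n / n !) (n : ℕ) :
    a n = (if n = 0 then 0 else p n / n !) + weightedConvolution w a n := by
  rcases Nat.eq_zero_or_pos n with rfl | hn
  · simp [ha, weightedConvolution]
  rw [ha, if_neg hn.ne', if_neg hn.ne', hγ n hn, add_div, sum_div, weightedConvolution]
  congr 1
  refine sum_congr rfl fun j hj => ?_
  obtain ⟨hj1, hjn⟩ := mem_Ico.1 hj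
  rw [ha, ha, if_neg (by omega), if_neg (by omega)]
  have hC : (n.choose j : ℝ) * j ! * (n - j)! = n ! := by
    exact_mod_cast Nat.choose_mul_factorial_mul_factorial hjn.le
  rw [← hC]
  field_simp

theorem weightedConvolution_nonneg {n : ℕ} (hw : ∀ j, 1 ≤ j → 0 ≤ w j)
    (ha : ∀ j < n, 0 ≤ a j) : 0 ≤ weightedConvolution w a n :=
  sum_nonneg fun j hj => by
    obtain ⟨hj1, hjn⟩ := mem_Ico.1 hj
    have := hw j hj1; have := ha j hjn; have := ha (n - j) (by omega)
    positivity

theorem nonneg_of_eq_add_weightedConvolution (hb : ∀ n, 0 ≤ b n)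
    (hw : ∀ j, 1 ≤ j → 0 ≤ w j) (hrec : ∀ n, a n = b n + weightedConvolution w a n) (n : ℕ) :
    0 ≤ a n := by
  induction n using Nat.strong_induction_on with
  | _ n ih => rw [hrec]; exact add_nonneg (hb n) (weightedConvolution_nonneg hw ih)

theorem derivConvolution_nonneg {θ : ℝ} (ha : ∀ n, 0 ≤ a n) (hθ : 0 ≤ θ) (n : ℕ) :
    0 ≤ derivConvolution a θ n :=
  sum_nonneg fun i _ => by have := ha i; have := ha (n - i); positivity

theorem succConvolution_nonneg (ha : ∀ n, 0 ≤ a n) (n : ℕ) : 0 ≤ succConvolution a n :=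
  sum_nonneg fun i _ => by have := ha i; have := ha (n - i); positivity

variable {K : ℝ}

theorem weighted_add_reflect_le {ε θ : ℝ} {n i : ℕ} (ha : ∀ n, 0 ≤ a n)
    (hw : ∀ j, w j ≤ K * (1 + j)) (hK : 0 ≤ K) (hi : 1 ≤ i) (hin : i < n)
    (hiθ : (i : ℝ) ≤ θ * n) (hε : (n : ℝ) + 2 ≤ (1 + ε) * n) :
    w i * a i * a (n - i) / n.choose i
        + w (n - i) * a (n - i) * a (n - (n - i)) / n.choose (n - i)
      ≤ K * (1 + ε) * (i * a i * θ ^ (i - 1) * a (n - i)) := by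
  rw [Nat.choose_symm hin.le, Nat.sub_sub_self hin.le]
  have hC : (0 : ℝ) < n.choose i := by exact_mod_cast Nat.choose_pos hin.le
  have h1ε : 0 ≤ 1 + ε := by nlinarith [(n.cast_nonneg : (0 : ℝ) ≤ n)]
  have hwsum : w i + w (n - i) ≤ K * ((1 + ε) * n) := by
    have := hw i; have := hw (n - i)
    rw [Nat.cast_sub hin.le] at this
    nlinarith
  have hAA := mul_nonneg (ha i) (ha (n - i))
  calc _ = (w i + w (n - i)) * (a i * a (n - i)) / n.choose i := by ring
    _ ≤ K * (1 + ε) * n * (a i * a (n - i)) / n.choose i := by gcongr; linarith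
    _ ≤ K * (1 + ε) * (i * θ ^ (i - 1) * n.choose i) * (a i * a (n - i)) / n.choose i := by
        gcongr; exact le_mul_pow_mul_choose hi hin.le hiθ
    _ = _ := by field_simp

theorem weighted_le_of_one_le_choose_mul_pow {q : ℝ} {n j : ℕ} (ha : ∀ n, 0 ≤ a n)
    (hw : ∀ j, w j ≤ K * (1 + j)) (hK : 0 ≤ K) (hq : 1 ≤ n.choose j * q ^ n) :
    w j * a j * a (n - j) / n.choose j ≤ K * q ^ n * ((1 + j) * a j * a (n - j)) := by
  have hC : (0 : ℝ) < n.choose j := by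
    refine lt_of_le_of_ne (Nat.cast_nonneg _) fun h => ?_
    rw [← h, zero_mul] at hq
    linarith
  have hAA := mul_nonneg (ha j) (ha (n - j))
  rw [div_le_iff₀ hC]
  calc w j * a j * a (n - j) ≤ K * (1 + j) * (a j * a (n - j)) := by
        rw [mul_assoc]; gcongr; exact hw j
    _ ≤ K * (1 + j) * (a j * a (n - j)) * (n.choose j * q ^ n) :=
        le_mul_of_one_le_right (by positivity) hq
    _ = _ := by ring

theorem weightedConvolution_le {ε θ q : ℝ} {n : ℕ} (ha : ∀ n, 0 ≤ a n)
    (hw : ∀ j, w j ≤ K * (1 + j)) (hK : 0 ≤ K) (hθ : 0 ≤ θ) (hq : 0 ≤ q)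
    (hε : (n : ℝ) + 2 ≤ (1 + ε) * n)
    (hmid : ∀ j : ℕ, θ * n ≤ j → θ * n ≤ n - j → 1 ≤ n.choose j * q ^ n) :
    weightedConvolution w a n
      ≤ K * (1 + ε) * derivConvolution a θ n + K * q ^ n * succConvolution a n := by
  set E₁ : ℕ → ℝ := fun i => K * (1 + ε) * (i * a i * θ ^ (i - 1) * a (n - i))
  set E₂ : ℕ → ℝ := fun i => K * q ^ n * ((1 + i) * a i * a (n - i))
  have h1ε : 0 ≤ 1 + ε := by nlinarith [(n.cast_nonneg : (0 : ℝ) ≤ n)]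
  have hE₁ : ∀ i, 0 ≤ E₁ i := fun i => by have := ha i; have := ha (n - i); positivity
  have hE₂ : ∀ i, 0 ≤ E₂ i := fun i => by have := ha i; have := ha (n - i); positivity
  have hpair : ∀ j ∈ Ico 1 n,
      w j * a j * a (n - j) / n.choose j
          + w (n - j) * a (n - j) * a (n - (n - j)) / n.choose (n - j)
        ≤ (E₁ j + E₂ j) + (E₁ (n - j) + E₂ (n - j)) := by
    intro j hj
    obtain ⟨hj1, hjn⟩ := mem_Ico.1 hj
    have hcast : ((n - j : ℕ) : ℝ) = n - j := Nat.cast_sub hjn.le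
    by_cases hsmall : (j : ℝ) ≤ θ * n
    · have := weighted_add_reflect_le ha hw hK hj1 hjn hsmall hε
      linarith [hE₂ j, hE₁ (n - j), hE₂ (n - j)]
    by_cases hlarge : (n : ℝ) - j ≤ θ * n
    · have h : _ ≤ E₁ (n - j) := weighted_add_reflect_le ha hw hK (by omega) (by omega)
        (by rwa [hcast]) hε
      rw [Nat.sub_sub_self hjn.le] at h ⊢
      linarith [hE₁ j, hE₂ j, hE₂ (n - j)]
    push Not at hsmall hlarge
    have h₁ := weighted_le_of_one_le_choose_mul_pow ha hw hK
      (hmid j hsmall.le (by linarith))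
    have h₂ := weighted_le_of_one_le_choose_mul_pow ha hw hK (j := n - j)
      (hmid (n - j) (by rw [hcast]; linarith) (by rw [hcast]; linarith))
    linarith [hE₁ j, hE₁ (n - j)]
  calc weightedConvolution w a n ≤ ∑ j ∈ Ico 1 n, (E₁ j + E₂ j) :=
        sum_Ico_le_sum_Ico_of_add_reflect_le hpair
    _ ≤ ∑ j ∈ range (n + 1), (E₁ j + E₂ j) := by
        refine sum_le_sum_of_subset_of_nonneg (fun j hj => ?_)
          fun j _ _ => add_nonneg (hE₁ j) (hE₂ j)
        simp only [mem_Ico, mem_range] at hj ⊢; omega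
    _ = _ := by rw [sum_add_distrib, derivConvolution, succConvolution, mul_sum, mul_sum]

theorem eventually_le_add_convolutions {ε θ : ℝ} (ha : ∀ n, 0 ≤ a n)
    (hrec : ∀ n, a n = b n + weightedConvolution w a n) (hw : ∀ j, w j ≤ K * (1 + j))
    (hK : 0 ≤ K) (hθ0 : 0 < θ) (hθ1 : θ < 1) (hε : 0 < ε) :
    ∀ᶠ n in atTop, a n ≤
      b n + K * (1 + ε) * derivConvolution a θ n + K * (θ ^ θ) ^ n * succConvolution a n := by
  filter_upwards [eventually_add_one_le_exp_mul_binEntropy_mul_rpow_pow hθ0 hθ1,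
    eventually_ge_atTop ⌈2 / ε⌉₊] with n hH hn
  have hε' : (n : ℝ) + 2 ≤ (1 + ε) * n := by
    have := (div_le_iff₀ hε).1 (Nat.ceil_le.1 hn)
    linarith
  rw [hrec, add_assoc]
  exact add_le_add le_rfl <| weightedConvolution_le ha hw hK hθ0.le (by positivity) hε'
    fun j hj hnj => one_le_choose_mul_rpow_pow hθ0 hj hnj hH

end Recursion

theorem Int.abs_sign_le_abs (s : ℤ) : |s.sign| ≤ |s| := by
  rcases eq_or_ne s 0 with rfl | hs
  · simp
  · rw [Int.abs_sign_of_ne_zero hs]; exact Int.one_le_abs hs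

theorem exists_lt_summable_of_ofReal_lt_seriesRadius {c : ℕ → ℝ} {x : ℝ}
    (h : ENNReal.ofReal x < seriesRadius c) :
    ∃ r : ℝ, x < r ∧ Summable fun n => |c n| * r ^ n := by
  obtain ⟨r, hr⟩ := lt_iSup_iff.1 h
  obtain ⟨hs, hxr⟩ := lt_iSup_iff.1 hr
  rw [← ENNReal.ofReal_coe_nnreal, ENNReal.ofReal_lt_ofReal_iff'] at hxr
  exact ⟨r, hxr.1, hs⟩

theorem summable_mul_pow_of_abs_le {c : ℕ → ℝ} {r y : ℝ}
    (hr : Summable fun n => |c n| * r ^ n) (hy : |y| ≤ r) : Summable fun n => c n * y ^ n :=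
  hr.of_norm_bounded fun n => by rw [norm_mul, norm_pow, norm_eq_abs, norm_eq_abs]; gcongr

theorem summable_nat_mul_mul_pow_sub_one {c : ℕ → ℝ} {r y : ℝ}
    (hr : Summable fun n => |c n| * r ^ n) (hy : |y| < r) :
    Summable fun n => n * c n * y ^ (n - 1) := by
  have hr0 : 0 < r := (abs_nonneg y).trans_lt hy
  have ht0 : 0 ≤ |y| / r := by positivity
  have ht1 : |y| / r < 1 := (div_lt_one hr0).2 hy
  have hlim : Tendsto (fun n : ℕ => (n + 1 : ℝ) * (|y| / r) ^ n) atTop (nhds 0) := by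
    simpa [add_mul] using (tendsto_self_mul_const_pow_of_lt_one ht0 ht1).add
      (tendsto_pow_atTop_nhds_zero_of_lt_one ht0 ht1)
  obtain ⟨M, hM⟩ := hlim.bddAbove_range
  rw [← summable_nat_add_iff 1]
  refine (((summable_nat_add_iff 1).2 hr).mul_left (M / r)).of_norm_bounded fun n => ?_
  have hMn : (n + 1 : ℝ) * (|y| / r) ^ n ≤ M := hM ⟨n, rfl⟩
  simp only [norm_mul, norm_pow, norm_eq_abs, Nat.add_sub_cancel, Nat.cast_add, Nat.cast_one]
  calc |(n : ℝ) + 1| * |c (n + 1)| * |y| ^ n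
      = |c (n + 1)| * r ^ (n + 1) * ((n + 1) * (|y| / r) ^ n / r) := by
        rw [abs_of_nonneg (by positivity), div_pow]; field_simp; ring
    _ ≤ |c (n + 1)| * r ^ (n + 1) * (M / r) := by gcongr
    _ = M / r * (|c (n + 1)| * r ^ (n + 1)) := by ring

theorem natCast_mul_pow_sub_one_mul (i : ℕ) (y : ℝ) :
    (i : ℝ) * y ^ (i - 1) * y = i * y ^ i := by
  cases i with
  | zero => simp
  | succ k => rw [Nat.add_sub_cancel, pow_succ]; ring

theorem hasSum_derivConvolution_mul_pow {a : ℕ → ℝ} {θ x : ℝ}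
    (hD : Summable fun n => n * a n * (θ * x) ^ (n - 1)) (hA : Summable fun n => a n * x ^ n) :
    HasSum (fun n => derivConvolution a θ n * x ^ n)
      (x * (∑' n, n * a n * (θ * x) ^ (n - 1)) * ∑' n, a n * x ^ n) := by
  have h := (hasSum_sum_range_mul_of_summable_norm hD.norm hA.norm).mul_left x
  rw [← mul_assoc] at h
  refine h.congr_fun fun n => ?_
  rw [derivConvolution, sum_mul, mul_sum]
  refine sum_congr rfl fun i hi => ?_
  have hxn : x ^ i * x ^ (n - i) = x ^ n := by
    rw [← pow_add, Nat.add_sub_cancel' (mem_range_succ_iff.1 hi)]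
  rw [mul_pow]
  linear_combination (-(θ ^ (i - 1) * a i * a (n - i) * x ^ (n - i)))
      * natCast_mul_pow_sub_one_mul i x - (i * θ ^ (i - 1) * a i * a (n - i)) * hxn

theorem hasSum_succConvolution_mul_pow {a : ℕ → ℝ} {y : ℝ}
    (hD : Summable fun n => n * a n * y ^ (n - 1)) (hA : Summable fun n => a n * y ^ n) :
    HasSum (fun n => succConvolution a n * y ^ n)
      ((∑' n, a n * y ^ n) ^ 2 + y * (∑' n, a n * y ^ n) * ∑' n, n * a n * y ^ (n - 1)) := by
  rw [sq, mul_assoc, mul_comm (∑' n, a n * y ^ n) (∑' n : ℕ, n * a n * y ^ (n - 1))]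
  refine ((hasSum_sum_range_mul_of_summable_norm hA.norm hA.norm).add
    ((hasSum_sum_range_mul_of_summable_norm hD.norm hA.norm).mul_left y)).congr_fun fun n => ?_
  rw [succConvolution, sum_mul, mul_sum, ← sum_add_distrib]
  refine sum_congr rfl fun i hi => ?_
  have hyn : y ^ i * y ^ (n - i) = y ^ n := by
    rw [← pow_add, Nat.add_sub_cancel' (mem_range_succ_iff.1 hi)]
  linear_combination (-(a i * a (n - i) * y ^ (n - i))) * natCast_mul_pow_sub_one_mul i y
    - ((1 + i) * a i * a (n - i)) * hyn

theorem tsum_le_add_sum_range_of_le {f g : ℕ → ℝ} {G : ℝ} (hf : Summable f)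
    (hg : HasSum g G) (hg0 : ∀ n, 0 ≤ g n) {N : ℕ} (h : ∀ n, N ≤ n → f n ≤ g n) :
    ∑' n, f n ≤ G + ∑ n ∈ range N, f n := by
  rw [← hf.sum_add_tsum_nat_add N, ← hg.tsum_eq, ← hg.summable.sum_add_tsum_nat_add N]
  have htail : ∑' n, f (n + N) ≤ ∑' n, g (n + N) :=
    ((summable_nat_add_iff N).2 hf).tsum_le_tsum (fun n => h _ (by omega))
      ((summable_nat_add_iff N).2 hg.summable)
  have hhead : 0 ≤ ∑ n ∈ range N, g n := sum_nonneg fun n _ => hg0 n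
  linarith

theorem tsum_mul_pow_le_of_coeff_le {a b : ℕ → ℝ} {K ε θ q r x : ℝ} {N : ℕ}
    (ha : ∀ n, 0 ≤ a n) (hb : ∀ n, 0 ≤ b n) (hba : ∀ n, b n ≤ a n) (hK : 0 ≤ K)
    (hε : 0 ≤ 1 + ε) (hθ0 : 0 ≤ θ) (hθ1 : θ < 1) (hq0 : 0 ≤ q) (hq1 : q < 1)
    (hx : 0 < x) (hxr : x < r) (hr : Summable fun n => |a n| * r ^ n)
    (hN : ∀ n, N ≤ n → a n ≤
      b n + K * (1 + ε) * derivConvolution a θ n + K * q ^ n * succConvolution a n) :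
    ∑' n, a n * x ^ n ≤ ∑' n, b n * x ^ n
      + K * (1 + ε) * x * (∑' n : ℕ, n * a n * (θ * x) ^ (n - 1)) * (∑' n, a n * x ^ n)
      + K * ((∑' n, a n * (q * x) ^ n) ^ 2
        + q * x * (∑' n, a n * (q * x) ^ n) * ∑' n : ℕ, n * a n * (q * x) ^ (n - 1))
      + ∑ n ∈ range N, a n * x ^ n := by
  have hA := summable_mul_pow_of_abs_le hr (by rw [abs_of_pos hx]; exact hxr.le)
  have hAq := summable_mul_pow_of_abs_le hr (y := q * x) (by
    rw [abs_of_nonneg (by positivity)]; nlinarith)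
  have hDθ := summable_nat_mul_mul_pow_sub_one hr (y := θ * x) (by
    rw [abs_of_nonneg (by positivity)]; nlinarith)
  have hDq := summable_nat_mul_mul_pow_sub_one hr (y := q * x) (by
    rw [abs_of_nonneg (by positivity)]; nlinarith)
  have hB : Summable fun n => b n * x ^ n := hA.of_nonneg_of_le
    (fun n => by have := hb n; positivity) fun n => by gcongr; exact hba n
  have hG := (hB.hasSum.add ((hasSum_derivConvolution_mul_pow hDθ hA).mul_left (K * (1 + ε)))).add
    ((hasSum_succConvolution_mul_pow hDq hAq).mul_left K)
  refine (tsum_le_add_sum_range_of_le hA hG (fun n => ?_) fun n hn => ?_).trans_eq (by ring)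
  · have := hb n
    have := derivConvolution_nonneg ha hθ0 n
    have := succConvolution_nonneg ha n
    positivity
  · calc a n * x ^ n
        ≤ (b n + K * (1 + ε) * derivConvolution a θ n + K * q ^ n * succConvolution a n)
          * x ^ n := by gcongr; exact hN n hn
      _ = _ := by rw [mul_pow]; ring

theorem A_bound_general
    (s : ℤ)
    (p : ℕ → ℝ) (hp : ∀ k, 1 ≤ k → 0 ≤ p k)
    (γ : ℕ → ℝ)
    (hγ : ∀ n, 1 ≤ n → γ n = p n +
      ∑ j ∈ Finset.Ico 1 n, ((|s| : ℝ) * j - (s.sign : ℝ)) * γ j * γ (n - j))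
    (a : ℕ → ℝ) (ha : ∀ n, a n = if n = 0 then 0 else γ n / (Nat.factorial n))
    (ρa : ℝ≥0∞) (hρa : ρa = seriesRadius a) :
    ∀ θ ε : ℝ, 0 < θ → θ < 1 / Real.exp 1 → 0 < ε →
      ∃ P : Polynomial ℝ, (∀ i, 0 ≤ P.coeff i) ∧
        ∀ x : ℝ, 0 < x → ENNReal.ofReal x < ρa →
          (∑' n, a n * x ^ n) ≤
            (∑' k, (if k = 0 then 0 else p k / (Nat.factorial k)) * x ^ k)
            + (|s| : ℝ) * (1 + ε) * x * (∑' n : ℕ, (n : ℝ) * a n * (θ * x) ^ (n - 1))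
                * (∑' n, a n * x ^ n)
            + (|s| : ℝ) * ((∑' n, a n * (Real.rpow θ θ * x) ^ n) ^ 2
                + Real.rpow θ θ * x * (∑' n, a n * (Real.rpow θ θ * x) ^ n)
                  * (∑' n : ℕ, (n : ℝ) * a n * (Real.rpow θ θ * x) ^ (n - 1)))
            + P.eval x := by
  intro θ ε hθ hθe hε
  have hθ1 : θ < 1 := hθe.trans (by
    rw [one_div]; exact inv_lt_one_of_one_lt₀ (by linarith [add_one_lt_exp one_ne_zero]))
  have hsign := abs_le.1
    (show |(s.sign : ℝ)| ≤ |(s : ℝ)| by exact_mod_cast Int.abs_sign_le_abs s)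
  have hrec := div_factorial_recursion hγ ha
  have hb : ∀ n, 0 ≤ if n = 0 then 0 else p n / (Nat.factorial n : ℝ) := fun n => by
    split_ifs with h
    · exact le_rfl
    · have := hp n (Nat.one_le_iff_ne_zero.2 h); positivity
  have hw : ∀ j : ℕ, 1 ≤ j → 0 ≤ |(s : ℝ)| * j - s.sign := fun j hj => by
    have : (1 : ℝ) ≤ j := by exact_mod_cast hj
    nlinarith [abs_nonneg (s : ℝ)]
  have ha0 := nonneg_of_eq_add_weightedConvolution hb hw hrec
  obtain ⟨N, hN⟩ := eventually_atTop.1 <| eventually_le_add_convolutions ha0 hrec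
    (fun j => by linarith) (abs_nonneg _) hθ hθ1 hε
  refine ⟨PowerSeries.trunc N (PowerSeries.mk a), fun i => ?_, fun x hx hxρ => ?_⟩
  · rw [PowerSeries.coeff_trunc, PowerSeries.coeff_mk]; split_ifs <;> simp [ha0]
  obtain ⟨r, hxr, hr⟩ := exists_lt_summable_of_ofReal_lt_seriesRadius (hρa ▸ hxρ)
  rw [Polynomial.eval, PowerSeries.eval₂_trunc_eq_sum_range]
  have hba : ∀ n, (if n = 0 then 0 else p n / (Nat.factorial n : ℝ)) ≤ a n := fun n => by
    rw [hrec n]; exact le_add_of_nonneg_right (weightedConvolution_nonneg hw fun j _ => ha0 j)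
  simpa only [RingHom.id_apply, PowerSeries.coeff_mk, Real.rpow_eq_pow] using
    tsum_mul_pow_le_of_coeff_le ha0 hb hba (abs_nonneg _) (by linarith) hθ.le hθ1
      (rpow_nonneg hθ.le θ) (rpow_lt_one hθ.le hθ1 hθ) hx hxr hr hN

/-- For every `0 < θ < 1/e` and `ε > 0` there is a polynomial `P_ε` with nonnegative
coefficients such that for `0 < x < ρ_a`,
`A(x) ≤ f(x) + |s|(1+ε)·x·A′(θx)·A(x) + |s|·(A(θ^θ x)² + θ^θ·x·A(θ^θ x)·A′(θ^θ x)) + P_ε(x)`,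
where `A′` is the termwise derivative of `A`. -/
theorem A_bound
    (s : ℤ) (hs : s ≠ 0)
    (p : ℕ → ℝ) (hp : ∀ k, 1 ≤ k → 0 ≤ p k)
    (ρ : ℝ≥0∞)
    (hρ : ρ = seriesRadius fun k => if k = 0 then 0 else p k / (Nat.factorial k))
    (hρ0 : 0 < ρ)
    (hf : ∃ k, 1 ≤ k ∧ p k ≠ 0)
    (γ : ℕ → ℝ)
    (hγ : ∀ n, 1 ≤ n → γ n = p n +
      ∑ j ∈ Finset.Ico 1 n, ((|s| : ℝ) * j - (s.sign : ℝ)) * γ j * γ (n - j))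
    (a : ℕ → ℝ) (ha : ∀ n, a n = if n = 0 then 0 else γ n / (Nat.factorial n))
    (ρa : ℝ≥0∞) (hρa : ρa = seriesRadius a) :
    ∀ θ ε : ℝ, 0 < θ → θ < 1 / Real.exp 1 → 0 < ε →
      ∃ P : Polynomial ℝ, (∀ i, 0 ≤ P.coeff i) ∧
        ∀ x : ℝ, 0 < x → ENNReal.ofReal x < ρa →
          (∑' n, a n * x ^ n) ≤
            (∑' k, (if k = 0 then 0 else p k / (Nat.factorial k)) * x ^ k)
            + (|s| : ℝ) * (1 + ε) * x * (∑' n : ℕ, (n : ℝ) * a n * (θ * x) ^ (n - 1))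
                * (∑' n, a n * x ^ n)
            + (|s| : ℝ) * ((∑' n, a n * (Real.rpow θ θ * x) ^ n) ^ 2
                + Real.rpow θ θ * x * (∑' n, a n * (Real.rpow θ θ * x) ^ n)
                  * (∑' n : ℕ, (n : ℝ) * a n * (Real.rpow θ θ * x) ^ (n - 1)))
            + P.eval x :=
  A_bound_general s p hp γ hγ a ha ρa hρa
end

section
/- If ρ_a < ρ and ρ_a < 1/(|s|·a_1), then the series Σ_{n≥1} a_n ρ_a^n converges to a finite value; that is, A(ρ_a) < ∞. (Under these hypotheses ρ_a is finite.) -/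
/-!
Put `x = ρ_a` and `b n = a n * x ^ n`. Dividing the recursion by `n!` gives
`b n = ε n + ∑_{0<j<n} (|s| j - sign s) · j! (n-j)! / n! · b j · b (n-j)` with
`ε n = p n x ^ n / n!`, summable because `x < ρ`. The term `j = n - 1` is at most
`c · b (n-1)` with `c = |s| a₁ x < 1`. Every other term is at most
`v j · b (n-j) / (n-j) + v (n-j) · b j / j`, where `v j = (|s| + 1) · j! j² / j^j · b j` is summable
because `j! / j^j ≤ 2 / 2^j` while `b j` grows at most like `(3/2)^j` (as `2x/3 < ρ_a`).
Summing over `n < N`, the convolution terms contribute at most `2 (∑ v) ∑_{m<N} b m / m`, and the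
part of `∑_{m<N} b m / m` beyond a fixed cutoff `M` is at most `S_N / M`, where `S_N = ∑_{m<N} b m`.
For `M` large this gives `S_N ≤ C + (1 + c) / 2 · S_N`, so the partial sums of `b` are bounded.
-/

open scoped BigOperators ENNReal NNReal

open Finset Nat

lemma summable_abs_mul_pow_of_lt_seriesRadius {c : ℕ → ℝ} {x : ℝ} (hx : 0 ≤ x)
    (h : ENNReal.ofReal x < seriesRadius c) : Summable fun n => |c n| * x ^ n := by
  obtain ⟨r, hr⟩ := lt_iSup_iff.mp h
  obtain ⟨hsum, hxr⟩ := lt_iSup_iff.mp hr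
  have hxr' : x ≤ r := by
    simpa using ((ENNReal.ofReal_lt_iff_lt_toReal hx ENNReal.coe_ne_top).mp hxr).le
  exact hsum.of_nonneg_of_le (fun n => by positivity) fun n => by gcongr

lemma mul_lt_one_of_ofReal_lt_inv {q x : ℝ} (hq : 0 ≤ q)
    (h : ENNReal.ofReal x < (ENNReal.ofReal q)⁻¹) : q * x < 1 := by
  rw [← one_div] at h
  rw [← ENNReal.ofReal_lt_one, ENNReal.ofReal_mul hq]
  exact ENNReal.mul_lt_of_lt_div' h

noncomputable def factorialWeight (j : ℕ) : ℝ := j ! * j ^ 2 / j ^ j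

lemma factorialWeight_nonneg (j : ℕ) : 0 ≤ factorialWeight j := by
  unfold factorialWeight; positivity

lemma two_mul_pow_le_succ_pow {j : ℕ} (hj : 1 ≤ j) : 2 * (j : ℝ) ^ j ≤ (j + 1) ^ j := by
  have hj0 : (0 : ℝ) < j := by exact_mod_cast hj
  have hbern := one_add_mul_le_pow (a := (1 / j : ℝ)) (by linarith [one_div_pos.mpr hj0]) j
  have hsucc : ((j : ℝ) + 1) ^ j = (1 + 1 / j) ^ j * j ^ j := by
    rw [← mul_pow]; field_simp
  rw [mul_one_div_cancel hj0.ne'] at hbern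
  rw [hsucc]
  nlinarith [pow_pos hj0 j]

lemma factorial_mul_two_pow_le {j : ℕ} (hj : 1 ≤ j) : (j ! : ℝ) * 2 ^ j ≤ 2 * (j : ℝ) ^ j := by
  induction j, hj using Nat.le_induction with
  | base => norm_num
  | succ j hj ih =>
    calc ((j + 1)! : ℝ) * 2 ^ (j + 1) = 2 * (j + 1) * (j ! * 2 ^ j) := by
          push_cast [Nat.factorial_succ]; ring
      _ ≤ 2 * (j + 1) * (2 * j ^ j) := by gcongr
      _ ≤ 2 * (j + 1) * (j + 1) ^ j := by gcongr; exact two_mul_pow_le_succ_pow hj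
      _ = 2 * ((j + 1 : ℕ) : ℝ) ^ (j + 1) := by push_cast; ring

lemma factorialWeight_le (j : ℕ) : factorialWeight j ≤ 2 * j ^ 2 / 2 ^ j := by
  rcases Nat.eq_zero_or_pos j with rfl | hj
  · simp [factorialWeight]
  have hj0 : (0 : ℝ) < j := by exact_mod_cast hj
  unfold factorialWeight
  rw [div_le_div_iff₀ (by positivity) (by positivity)]
  nlinarith [factorial_mul_two_pow_le hj, sq_nonneg (j : ℝ)]

lemma summable_factorialWeight_mul {b : ℕ → ℝ} (hb : ∀ n, 0 ≤ b n) {x r : ℝ} (hx : 0 ≤ x)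
    (hxr : x < 2 * r) (hsum : Summable fun n => b n * r ^ n) :
    Summable fun n => factorialWeight n * (b n * x ^ n) := by
  have hr : 0 < r := by linarith
  set q := x / (2 * r) with hq
  have hq0 : 0 ≤ q := by positivity
  have hgeom : Summable fun n : ℕ => (n : ℝ) ^ 2 * q ^ n :=
    summable_pow_mul_geometric_of_norm_lt_one 2
      (by rwa [Real.norm_of_nonneg hq0, div_lt_one (by linarith)])
  set K := ∑' n : ℕ, (n : ℝ) ^ 2 * q ^ n
  refine (hsum.mul_left (2 * K)).of_nonneg_of_le
    (fun n => mul_nonneg (factorialWeight_nonneg n) (mul_nonneg (hb n) (pow_nonneg hx n)))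
    fun n => ?_
  have hbx : 0 ≤ b n * x ^ n := mul_nonneg (hb n) (pow_nonneg hx n)
  calc factorialWeight n * (b n * x ^ n) ≤ 2 * n ^ 2 / 2 ^ n * (b n * x ^ n) :=
        mul_le_mul_of_nonneg_right (factorialWeight_le n) hbx
    _ = 2 * (n ^ 2 * q ^ n) * (b n * r ^ n) := by
        rw [hq, div_pow, mul_pow]; field_simp
    _ ≤ 2 * K * (b n * r ^ n) := by
        gcongr
        · exact mul_nonneg (hb n) (pow_nonneg hr.le n)
        · exact hgeom.le_tsum n fun m _ => by positivity

lemma mul_pow_le_mul_succ_pow {j k : ℕ} (hj : 1 ≤ j) (hjk : j ≤ k) :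
    k * j ^ j ≤ j * (k + 1) ^ j := by
  obtain ⟨i, rfl⟩ : ∃ i, j = i + 1 := ⟨j - 1, by omega⟩
  calc k * (i + 1) ^ (i + 1) = (i + 1) * ((i + 1) ^ i * k) := by ring
    _ ≤ (i + 1) * ((k + 1) ^ i * (k + 1)) := by gcongr <;> omega
    _ = (i + 1) * (k + 1) ^ (i + 1) := by ring

lemma sq_mul_pow_le_sq_mul_succ_pow {j k : ℕ} (hk : 2 ≤ k) (hkj : k ≤ j) :
    j ^ 2 * k ^ k ≤ k ^ 2 * (j + 1) ^ k := by
  obtain ⟨i, rfl⟩ : ∃ i, k = i + 2 := ⟨k - 2, by omega⟩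
  calc j ^ 2 * (i + 2) ^ (i + 2) = (i + 2) ^ 2 * ((i + 2) ^ i * j ^ 2) := by ring
    _ ≤ (i + 2) ^ 2 * ((j + 1) ^ i * (j + 1) ^ 2) := Nat.mul_le_mul_left _
      (Nat.mul_le_mul (Nat.pow_le_pow_left (by omega) _) (Nat.pow_le_pow_left (by omega) _))
    _ = (i + 2) ^ 2 * (j + 1) ^ (i + 2) := by ring

lemma mul_factorial_mul_factorial_div_le {j k : ℕ} (hj : 1 ≤ j) (hk : 2 ≤ k) :
    (j : ℝ) * (j ! * k ! / (j + k)!) ≤ factorialWeight j / k + factorialWeight k / j := by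
  have hj0 : (0 : ℝ) < j := by exact_mod_cast hj
  have hk0 : (0 : ℝ) < k := by exact_mod_cast (by omega : 0 < k)
  have hjk : (0 : ℝ) < (j + k)! := by exact_mod_cast (j + k).factorial_pos
  unfold factorialWeight
  rcases le_total j k with hle | hle
  · have key : j * (j ! * k !) * (j ^ j * k) ≤ j ! * j ^ 2 * (j + k)! :=
      calc j * (j ! * k !) * (j ^ j * k) = j ! * j * k ! * (k * j ^ j) := by ring
        _ ≤ j ! * j * k ! * (j * (k + 1) ^ j) :=
          Nat.mul_le_mul_left _ (mul_pow_le_mul_succ_pow hj hle)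
        _ = j ! * j ^ 2 * (k ! * (k + 1) ^ j) := by ring
        _ ≤ j ! * j ^ 2 * (k + j)! := by gcongr; exact Nat.factorial_mul_pow_le_factorial
        _ = j ! * j ^ 2 * (j + k)! := by rw [Nat.add_comm]
    refine le_add_of_le_of_nonneg ?_ (by positivity)
    rw [div_div, mul_div_assoc', div_le_div_iff₀ hjk (by positivity)]
    exact_mod_cast key
  · have key : j * (j ! * k !) * (k ^ k * j) ≤ k ! * k ^ 2 * (j + k)! :=
      calc j * (j ! * k !) * (k ^ k * j) = k ! * j ! * (j ^ 2 * k ^ k) := by ring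
        _ ≤ k ! * j ! * (k ^ 2 * (j + 1) ^ k) :=
          Nat.mul_le_mul_left _ (sq_mul_pow_le_sq_mul_succ_pow hk hle)
        _ = k ! * k ^ 2 * (j ! * (j + 1) ^ k) := by ring
        _ ≤ k ! * k ^ 2 * (j + k)! := by gcongr; exact Nat.factorial_mul_pow_le_factorial
    refine le_add_of_nonneg_of_le (by positivity) ?_
    rw [div_div, mul_div_assoc', div_le_div_iff₀ hjk (by positivity)]
    exact_mod_cast key

lemma sum_range_sum_Ico_mul_le {f g : ℕ → ℝ} (hf : ∀ n, 0 ≤ f n) (hg : ∀ n, 0 ≤ g n) (N : ℕ) :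
    ∑ n ∈ range N, ∑ j ∈ Ico 1 n, f j * g (n - j)
      ≤ (∑ j ∈ range N, f j) * ∑ k ∈ range N, g k := by
  have hfg : ∀ j k, 0 ≤ f j * g k := fun j k => mul_nonneg (hf j) (hg k)
  calc ∑ n ∈ range N, ∑ j ∈ Ico 1 n, f j * g (n - j)
      ≤ ∑ n ∈ range N, ∑ j ∈ range (n + 1), f j * g (n - j) :=
        sum_le_sum fun n _ => sum_le_sum_of_subset_of_nonneg
          (fun j hj => by simp only [mem_Ico, mem_range] at hj ⊢; omega) fun _ _ _ => hfg _ _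
    _ = ∑ j ∈ range N, ∑ k ∈ range (N - j), f j * g k :=
        sum_range_diag_flip N fun j k => f j * g k
    _ ≤ ∑ j ∈ range N, ∑ k ∈ range N, f j * g k :=
        sum_le_sum fun j _ => sum_le_sum_of_subset_of_nonneg
          (range_subset_range.mpr (Nat.sub_le _ _)) fun _ _ _ => hfg _ _
    _ = _ := (sum_mul_sum _ _ _ _).symm

lemma sum_range_sub_one_le {b : ℕ → ℝ} (hb : ∀ n, 0 ≤ b n) (hb0 : b 0 = 0) (N : ℕ) :
    ∑ n ∈ range N, b (n - 1) ≤ ∑ n ∈ range N, b n := by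
  cases N with
  | zero => simp
  | succ N =>
    rw [sum_range_succ' (fun n => b (n - 1)), sum_range_succ]
    simp only [Nat.add_sub_cancel, Nat.zero_sub, hb0, add_zero]
    linarith [hb N]

lemma sum_range_div_le {b : ℕ → ℝ} (hb : ∀ n, 0 ≤ b n) {M : ℕ} (hM : 0 < M) (N : ℕ) :
    ∑ n ∈ range N, b n / n ≤ ∑ n ∈ range M, b n / n + (∑ n ∈ range N, b n) / M := by
  have hbM : ∀ n, 0 ≤ b n / M := fun n => div_nonneg (hb n) M.cast_nonneg
  rcases le_total N M with hNM | hMN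
  · refine le_add_of_le_of_nonneg ?_ (div_nonneg (sum_nonneg fun n _ => hb n) M.cast_nonneg)
    exact sum_le_sum_of_subset_of_nonneg (range_subset_range.mpr hNM)
      fun n _ _ => div_nonneg (hb n) n.cast_nonneg
  rw [← sum_range_add_sum_Ico _ hMN, sum_div]
  gcongr
  calc ∑ n ∈ Ico M N, b n / n ≤ ∑ n ∈ Ico M N, b n / M :=
        sum_le_sum fun n hn => div_le_div_of_nonneg_left (hb n) (by exact_mod_cast hM)
          (by exact_mod_cast (mem_Ico.mp hn).1)
    _ ≤ ∑ n ∈ range N, b n / M := sum_le_sum_of_subset_of_nonneg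
          (fun n hn => by simp only [mem_Ico, mem_range] at hn ⊢; omega) fun n _ _ => hbM n

theorem summable_of_le_add_conv {b ε v : ℕ → ℝ} {c : ℝ} (hb : ∀ n, 0 ≤ b n) (hb0 : b 0 = 0)
    (hε : ∀ n, 0 ≤ ε n) (hεs : Summable ε) (hv : ∀ n, 0 ≤ v n) (hvs : Summable v)
    (hc0 : 0 ≤ c) (hc1 : c < 1)
    (H : ∀ n, 1 ≤ n → b n ≤ ε n + c * b (n - 1) +
      ∑ j ∈ Ico 1 n, (v j * (b (n - j) / (n - j : ℕ)) + v (n - j) * (b j / j))) :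
    Summable b := by
  set F := ∑' n, ε n
  set W := ∑' n, v n
  have hW0 : 0 ≤ W := tsum_nonneg hv
  have hbn : ∀ n : ℕ, 0 ≤ b n / n := fun n => div_nonneg (hb n) n.cast_nonneg
  obtain ⟨M, hM⟩ := exists_nat_gt (4 * W / (1 - c))
  have hM0 : (0 : ℝ) < M := lt_of_le_of_lt (div_nonneg (by positivity) (by linarith)) hM
  have hWM : 2 * W / M ≤ (1 - c) / 2 := by
    rw [div_lt_iff₀ (by linarith)] at hM
    rw [div_le_iff₀ hM0]
    linarith
  set Q := ∑ n ∈ range M, b n / n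
  refine summable_of_sum_range_le hb (c := 2 * (F + 2 * W * Q) / (1 - c)) fun N => ?_
  set S := ∑ n ∈ range N, b n
  have hS0 : 0 ≤ S := sum_nonneg fun n _ => hb n
  have hdiv : (∑ n ∈ range N, v n) * ∑ n ∈ range N, b n / n ≤ W * (Q + S / M) :=
    mul_le_mul (Summable.sum_le_tsum _ (fun n _ => hv n) hvs)
      (sum_range_div_le hb (by exact_mod_cast hM0) N) (sum_nonneg fun n _ => hbn n) hW0
  have hconv₁ : ∑ n ∈ range N, ∑ j ∈ Ico 1 n, v j * (b (n - j) / (n - j : ℕ))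
      ≤ W * (Q + S / M) :=
    (sum_range_sum_Ico_mul_le hv hbn N).trans hdiv
  have hconv₂ : ∑ n ∈ range N, ∑ j ∈ Ico 1 n, v (n - j) * (b j / j) ≤ W * (Q + S / M) := by
    simp_rw [mul_comm (v _)]
    exact (sum_range_sum_Ico_mul_le hbn hv N).trans (by rw [mul_comm]; exact hdiv)
  have hS : S ≤ F + c * S + 2 * (W * (Q + S / M)) :=
    calc S ≤ ∑ n ∈ range N, (ε n + c * b (n - 1) +
          ∑ j ∈ Ico 1 n, (v j * (b (n - j) / (n - j : ℕ)) + v (n - j) * (b j / j))) := by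
          refine sum_le_sum fun n _ => ?_
          rcases Nat.eq_zero_or_pos n with rfl | hn
          · simpa [hb0] using hε 0
          · exact H n hn
      _ = ∑ n ∈ range N, ε n + c * ∑ n ∈ range N, b (n - 1) +
          (∑ n ∈ range N, ∑ j ∈ Ico 1 n, v j * (b (n - j) / (n - j : ℕ)) +
            ∑ n ∈ range N, ∑ j ∈ Ico 1 n, v (n - j) * (b j / j)) := by
          simp only [sum_add_distrib, mul_sum]
      _ ≤ F + c * S + (W * (Q + S / M) + W * (Q + S / M)) := by
          gcongr
          · exact Summable.sum_le_tsum _ (fun n _ => hε n) hεs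
          · exact sum_range_sub_one_le hb hb0 N
      _ = F + c * S + 2 * (W * (Q + S / M)) := by ring
  have hWS : 2 * W * (S / M) ≤ (1 - c) / 2 * S :=
    calc 2 * W * (S / M) = 2 * W / M * S := by ring
      _ ≤ (1 - c) / 2 * S := mul_le_mul_of_nonneg_right hWM hS0
  rw [le_div_iff₀ (by linarith)]
  nlinarith

lemma recursion_nonneg {S σ : ℝ} (hS : 1 ≤ S) (hσ : |σ| ≤ 1) {p γ : ℕ → ℝ}
    (hp : ∀ k, 1 ≤ k → 0 ≤ p k)
    (hγ : ∀ n, 1 ≤ n → γ n = p n + ∑ j ∈ Ico 1 n, (S * j - σ) * γ j * γ (n - j))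
    (n : ℕ) (hn : 1 ≤ n) : 0 ≤ γ n := by
  induction n using Nat.strong_induction_on with
  | _ n ih =>
    rw [hγ n hn]
    refine add_nonneg (hp n hn) (sum_nonneg fun j hj => ?_)
    obtain ⟨hj1, hjn⟩ := mem_Ico.mp hj
    have hj1' : (1 : ℝ) ≤ j := by exact_mod_cast hj1
    have hσj : σ ≤ S * j := by nlinarith [le_abs_self σ]
    exact mul_nonneg (mul_nonneg (by linarith) (ih j hjn hj1)) (ih (n - j) (by omega) (by omega))

lemma mul_pow_eq_add_sum {S σ : ℝ} {p γ a : ℕ → ℝ}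
    (hγ : ∀ n, 1 ≤ n → γ n = p n + ∑ j ∈ Ico 1 n, (S * j - σ) * γ j * γ (n - j))
    (ha : ∀ n, 1 ≤ n → a n = γ n / n !) (x : ℝ) {n : ℕ} (hn : 1 ≤ n) :
    a n * x ^ n = p n / n ! * x ^ n + ∑ j ∈ Ico 1 n,
      (S * j - σ) * (j ! * (n - j)! / n ! : ℝ) * (a j * x ^ j) * (a (n - j) * x ^ (n - j)) := by
  rw [ha n hn, hγ n hn, add_div, add_mul, sum_div, sum_mul]
  congr 1
  refine sum_congr rfl fun j hj => ?_
  obtain ⟨hj1, hjn⟩ := mem_Ico.mp hj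
  have hx : x ^ n = x ^ j * x ^ (n - j) := by rw [← pow_add, Nat.add_sub_cancel' hjn.le]
  rw [ha j hj1, ha (n - j) (by omega), hx]
  field_simp

lemma factorial_ratio_term_le {S σ : ℝ} (hS : 1 ≤ S) (hσ : |σ| ≤ 1) {j k : ℕ} (hj : 1 ≤ j)
    (hk : 2 ≤ k) {x y : ℝ} (hx : 0 ≤ x) (hy : 0 ≤ y) :
    (S * j - σ) * (j ! * k ! / (j + k)! : ℝ) * x * y ≤
      (S + 1) * factorialWeight j * x * (y / k) + (S + 1) * factorialWeight k * y * (x / j) := by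
  have hj1 : (1 : ℝ) ≤ j := by exact_mod_cast hj
  have hcoeff : S * j - σ ≤ (S + 1) * j := by nlinarith [neg_abs_le σ]
  have hfxy : 0 ≤ (j ! * k ! / (j + k)! : ℝ) * (x * y) := by positivity
  calc (S * j - σ) * (j ! * k ! / (j + k)! : ℝ) * x * y
      = (S * j - σ) * ((j ! * k ! / (j + k)! : ℝ) * (x * y)) := by ring
    _ ≤ (S + 1) * j * ((j ! * k ! / (j + k)! : ℝ) * (x * y)) :=
        mul_le_mul_of_nonneg_right hcoeff hfxy
    _ = (S + 1) * (x * y) * (j * (j ! * k ! / (j + k)!)) := by ring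
    _ ≤ (S + 1) * (x * y) * (factorialWeight j / k + factorialWeight k / j) :=
        mul_le_mul_of_nonneg_left (mul_factorial_mul_factorial_div_le hj hk)
          (mul_nonneg (by linarith) (mul_nonneg hx hy))
    _ = _ := by ring

lemma le_add_conv_of_eq_add_sum {S σ : ℝ} (hS : 1 ≤ S) (hσ : |σ| ≤ 1) {b ε : ℕ → ℝ}
    (hb : ∀ n, 0 ≤ b n) {n : ℕ} (hn : 1 ≤ n)
    (h : b n = ε n + ∑ j ∈ Ico 1 n, (S * j - σ) * (j ! * (n - j)! / n ! : ℝ) * b j * b (n - j)) :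
    b n ≤ ε n + S * b 1 * b (n - 1) + ∑ j ∈ Ico 1 n,
      ((S + 1) * factorialWeight j * b j * (b (n - j) / (n - j : ℕ)) +
        (S + 1) * factorialWeight (n - j) * b (n - j) * (b j / j)) := by
  have hR : ∀ j, 0 ≤ (S + 1) * factorialWeight j * b j * (b (n - j) / (n - j : ℕ)) +
      (S + 1) * factorialWeight (n - j) * b (n - j) * (b j / j) := fun j => by
    have := factorialWeight_nonneg j
    have := factorialWeight_nonneg (n - j)
    have := hb j
    have := hb (n - j)
    have : 0 ≤ S + 1 := by linarith
    positivity
  rcases Nat.lt_or_ge n 2 with hn2 | hn2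
  · obtain rfl : n = 1 := by omega
    simp only [Ico_self, sum_empty, add_zero, Nat.sub_self] at h ⊢
    nlinarith [mul_nonneg (mul_nonneg (by linarith : 0 ≤ S) (hb 1)) (hb 0)]
  obtain ⟨m, rfl⟩ : ∃ m, n = m + 2 := ⟨n - 2, by omega⟩
  rw [h, sum_Ico_succ_top (by omega : 1 ≤ m + 1)]
  have hfrac : ((m + 1)! * (m + 2 - (m + 1))! / (m + 2)! : ℝ) = 1 / (m + 2) := by
    rw [show m + 2 - (m + 1) = 1 by omega, Nat.factorial_succ (m + 1), factorial_one]
    push_cast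
    field_simp
    ring
  have hedge : (S * (m + 1 : ℕ) - σ) * (1 / (m + 2)) ≤ S := by
    rw [mul_one_div, div_le_iff₀ (by positivity)]
    push_cast
    nlinarith [neg_abs_le σ]
  have hmid : ∑ j ∈ Ico 1 (m + 1),
        (S * j - σ) * (j ! * (m + 2 - j)! / (m + 2)! : ℝ) * b j * b (m + 2 - j)
      ≤ ∑ j ∈ Ico 1 (m + 2),
        ((S + 1) * factorialWeight j * b j * (b (m + 2 - j) / (m + 2 - j : ℕ)) +
          (S + 1) * factorialWeight (m + 2 - j) * b (m + 2 - j) * (b j / j)) := by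
    refine (sum_le_sum fun j hj => ?_).trans
      (sum_le_sum_of_subset_of_nonneg (Ico_subset_Ico_right (by omega)) fun j _ _ => hR j)
    obtain ⟨hj1, hjm⟩ := mem_Ico.mp hj
    have := factorial_ratio_term_le hS hσ hj1 (by omega : 2 ≤ m + 2 - j) (hb j) (hb (m + 2 - j))
    rwa [Nat.add_sub_cancel' (by omega : j ≤ m + 2)] at this
  rw [hfrac, show m + 2 - (m + 1) = 1 by omega, show m + 2 - 1 = m + 1 by omega]
  nlinarith [mul_le_mul_of_nonneg_right hedge (mul_nonneg (hb (m + 1)) (hb 1))]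

theorem summable_mul_pow_of_eq_add_sum {S σ : ℝ} (hS : 1 ≤ S) (hσ : |σ| ≤ 1) {a ε : ℕ → ℝ}
    (ha : ∀ n, 0 ≤ a n) (ha0 : a 0 = 0) {x r : ℝ} (hx : 0 ≤ x) (hxr : x < 2 * r)
    (har : Summable fun n => a n * r ^ n) (hε : ∀ n, 0 ≤ ε n) (hεs : Summable ε)
    (hc : S * (a 1 * x) < 1)
    (h : ∀ n, 1 ≤ n → a n * x ^ n = ε n + ∑ j ∈ Ico 1 n,
      (S * j - σ) * (j ! * (n - j)! / n ! : ℝ) * (a j * x ^ j) * (a (n - j) * x ^ (n - j))) :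
    Summable fun n => a n * x ^ n := by
  have hb : ∀ n, 0 ≤ a n * x ^ n := fun n => mul_nonneg (ha n) (pow_nonneg hx n)
  have hv : Summable fun j => (S + 1) * factorialWeight j * (a j * x ^ j) := by
    simpa only [mul_assoc] using (summable_factorialWeight_mul ha hx hxr har).mul_left (S + 1)
  refine summable_of_le_add_conv (c := S * (a 1 * x ^ 1)) hb (by simp [ha0]) hε hεs
    (fun n => mul_nonneg (mul_nonneg (by linarith) (factorialWeight_nonneg n)) (hb n)) hv
    (mul_nonneg (by linarith) (hb 1)) (by rwa [pow_one])
    fun n hn => le_add_conv_of_eq_add_sum hS hσ hb hn (h n hn)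

theorem A_at_radius_finite_general
    (s : ℤ) (hs : s ≠ 0)
    (p : ℕ → ℝ) (hp : ∀ k, 1 ≤ k → 0 ≤ p k)
    (ρ : ℝ≥0∞)
    (hρ : ρ = seriesRadius fun k => if k = 0 then 0 else p k / (Nat.factorial k))
    (γ : ℕ → ℝ)
    (hγ : ∀ n, 1 ≤ n → γ n = p n +
      ∑ j ∈ Finset.Ico 1 n, ((|s| : ℝ) * j - (s.sign : ℝ)) * γ j * γ (n - j))
    (a : ℕ → ℝ) (ha : ∀ n, a n = if n = 0 then 0 else γ n / (Nat.factorial n))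
    (ρa : ℝ≥0∞) (hρa : ρa = seriesRadius a)
    (h1 : ρa < ρ)
    (h2 : ρa < (ENNReal.ofReal ((|s| : ℝ) * a 1))⁻¹) :
    Summable fun n => a n * ρa.toReal ^ n := by
  have hS : 1 ≤ (|s| : ℝ) := by rw [← Int.cast_abs]; exact_mod_cast Int.one_le_abs hs
  have hσ : |(s.sign : ℝ)| ≤ 1 := by rw [← Int.cast_abs, Int.abs_sign_of_ne_zero hs]; simp
  have ha' : ∀ n, 1 ≤ n → a n = γ n / n ! := fun n hn => by rw [ha, if_neg (by omega)]
  have ha0 : ∀ n, 0 ≤ a n := fun n => by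
    rcases Nat.eq_zero_or_pos n with rfl | hn
    · simp [ha]
    · rw [ha' n hn]; exact div_nonneg (recursion_nonneg hS hσ hp hγ n hn) (by positivity)
  set c : ℕ → ℝ := fun k => if k = 0 then 0 else p k / (k ! : ℝ)
  set x := ρa.toReal
  have hxρa : ENNReal.ofReal x = ρa := ENNReal.ofReal_toReal h1.ne_top
  rcases (show 0 ≤ x from ENNReal.toReal_nonneg).eq_or_lt with hx | hx
  · exact summable_of_ne_finset_zero (s := {0}) fun n hn => by
      simp [← hx, zero_pow (by simpa using hn : n ≠ 0)]
  refine summable_mul_pow_of_eq_add_sum hS hσ ha0 (by simp [ha]) hx.le (r := 2 * x / 3)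
    (by linarith) ?_ (ε := fun n => |c n| * x ^ n) (fun n => by positivity)
    (summable_abs_mul_pow_of_lt_seriesRadius hx.le (hxρa.trans_lt (h1.trans_eq hρ))) ?_
    fun n hn => ?_
  · have hy : ENNReal.ofReal (2 * x / 3) < seriesRadius a := by
      rw [← hρa, ← hxρa]; exact (ENNReal.ofReal_lt_ofReal_iff hx).mpr (by linarith)
    simpa only [abs_of_nonneg (ha0 _)] using
      summable_abs_mul_pow_of_lt_seriesRadius (by positivity) hy
  · rw [← hxρa] at h2
    simpa only [mul_assoc] using
      mul_lt_one_of_ofReal_lt_inv (mul_nonneg (abs_nonneg _) (ha0 1)) h2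
  · rw [show c n = p n / n ! from if_neg (by omega),
      abs_of_nonneg (div_nonneg (hp n hn) (by positivity))]
    exact mul_pow_eq_add_sum hγ ha' x hn

/-- If `ρ_a < ρ` and `ρ_a < 1/(|s|·a_1)`, then `A(ρ_a) < ∞`, i.e. the series
`Σ_{n≥1} a_n ρ_a^n` converges. -/
theorem A_at_radius_finite
    (s : ℤ) (hs : s ≠ 0)
    (p : ℕ → ℝ) (hp : ∀ k, 1 ≤ k → 0 ≤ p k)
    (ρ : ℝ≥0∞)
    (hρ : ρ = seriesRadius fun k => if k = 0 then 0 else p k / (Nat.factorial k))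
    (hρ0 : 0 < ρ)
    (hf : ∃ k, 1 ≤ k ∧ p k ≠ 0)
    (γ : ℕ → ℝ)
    (hγ : ∀ n, 1 ≤ n → γ n = p n +
      ∑ j ∈ Finset.Ico 1 n, ((|s| : ℝ) * j - (s.sign : ℝ)) * γ j * γ (n - j))
    (a : ℕ → ℝ) (ha : ∀ n, a n = if n = 0 then 0 else γ n / (Nat.factorial n))
    (ρa : ℝ≥0∞) (hρa : ρa = seriesRadius a)
    (h1 : ρa < ρ)
    (h2 : ρa < (ENNReal.ofReal ((|s| : ℝ) * a 1))⁻¹) :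
    Summable fun n => a n * ρa.toReal ^ n :=
  A_at_radius_finite_general s hs p hp ρ hρ γ hγ a ha ρa hρa h1 h2
end

section
/- Suppose that either s ≠ 1 or p(n) > 0 for some n > 1. Then ρ_a ≤ min{ρ, 1/(|s|·a_1)} (with 1/(|s|·a_1) = ∞ when a_1 = 0). -/
open scoped BigOperators ENNReal NNReal

/-- If either `s ≠ 1` or `p(n) > 0` for some `n > 1`, then
`ρ_a ≤ min{ρ, 1/(|s|·a_1)}` (with the convention `1/(|s|·a_1) = ∞` if `a_1 = 0`). -/
theorem radius_upper_bound
    (s : ℤ) (hs : s ≠ 0)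
    (p : ℕ → ℝ) (hp : ∀ k, 1 ≤ k → 0 ≤ p k)
    (ρ : ℝ≥0∞)
    (hρ : ρ = seriesRadius fun k => if k = 0 then 0 else p k / (Nat.factorial k))
    (hρ0 : 0 < ρ)
    (hf : ∃ k, 1 ≤ k ∧ p k ≠ 0)
    (γ : ℕ → ℝ)
    (hγ : ∀ n, 1 ≤ n → γ n = p n +
      ∑ j ∈ Finset.Ico 1 n, ((|s| : ℝ) * j - (s.sign : ℝ)) * γ j * γ (n - j))
    (a : ℕ → ℝ) (ha : ∀ n, a n = if n = 0 then 0 else γ n / (Nat.factorial n))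
    (ρa : ℝ≥0∞) (hρa : ρa = seriesRadius a)
    (hcase : s ≠ 1 ∨ ∃ n, 1 < n ∧ 0 < p n) :
    ρa ≤ min ρ (ENNReal.ofReal ((|s| : ℝ) * a 1))⁻¹ := by
  -- basic facts about s
  have habs1 : (1 : ℝ) ≤ (|s| : ℝ) := by exact_mod_cast Int.one_le_abs hs
  have hsign_le : (s.sign : ℝ) ≤ 1 := by
    rcases lt_trichotomy s 0 with h | h | h
    · rw [Int.sign_eq_neg_one_of_neg h]; norm_num
    · exact absurd h hs
    · simp [Int.sign_eq_one_of_pos h]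
  -- nonnegativity of coefficients
  have hcoeff : ∀ j : ℕ, 1 ≤ j → (0 : ℝ) ≤ (|s| : ℝ) * j - s.sign := by
    intro j hj
    have : (1 : ℝ) ≤ (j : ℝ) := by exact_mod_cast hj
    nlinarith
  -- γ is nonnegative
  have hγ0 : ∀ n, 1 ≤ n → 0 ≤ γ n := by
    intro n
    induction n using Nat.strong_induction_on with
    | _ n ih =>
      intro hn
      rw [hγ n hn]
      have hsum : 0 ≤ ∑ j ∈ Finset.Ico 1 n,
          ((|s| : ℝ) * j - (s.sign : ℝ)) * γ j * γ (n - j) := by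
        apply Finset.sum_nonneg
        intro j hj
        rw [Finset.mem_Ico] at hj
        have h1 := ih j hj.2 hj.1
        have h2 := ih (n - j) (by omega) (by omega)
        exact mul_nonneg (mul_nonneg (hcoeff j hj.1) h1) h2
      linarith [hp n hn]
  -- each term of the sum is nonneg
  have hterm : ∀ n j : ℕ, 1 ≤ j → j < n →
      (0 : ℝ) ≤ ((|s| : ℝ) * j - (s.sign : ℝ)) * γ j * γ (n - j) := by
    intro n j h1 h2
    exact mul_nonneg (mul_nonneg (hcoeff j h1) (hγ0 j h1)) (hγ0 (n - j) (by omega))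
  -- γ dominates p
  have hγp : ∀ n, 1 ≤ n → p n ≤ γ n := by
    intro n hn
    rw [hγ n hn]
    have : 0 ≤ ∑ j ∈ Finset.Ico 1 n,
        ((|s| : ℝ) * j - (s.sign : ℝ)) * γ j * γ (n - j) :=
      Finset.sum_nonneg fun j hj => by
        rw [Finset.mem_Ico] at hj; exact hterm n j hj.1 hj.2
    linarith
  -- key single-term lower bound
  have hstep : ∀ n, 1 ≤ n → ((|s| : ℝ) * n - (s.sign : ℝ)) * γ n * γ 1 ≤ γ (n + 1) := by
    intro n hn
    rw [hγ (n + 1) (by omega)]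
    have hmem : n ∈ Finset.Ico 1 (n + 1) := by
      rw [Finset.mem_Ico]; omega
    have hle := Finset.single_le_sum
      (f := fun j : ℕ => ((|s| : ℝ) * j - (s.sign : ℝ)) * γ j * γ (n + 1 - j))
      (fun j hj => by rw [Finset.mem_Ico] at hj; exact hterm (n + 1) j hj.1 hj.2) hmem
    have hsimp : n + 1 - n = 1 := by omega
    rw [hsimp] at hle
    linarith [hp (n + 1) (by omega)]
  -- a is nonnegative
  have ha0 : ∀ n, 0 ≤ a n := by
    intro n
    rw [ha n]
    rcases Nat.eq_zero_or_pos n with h | h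
    · simp [h]
    · rw [if_neg (by omega)]
      exact div_nonneg (hγ0 n h) (by positivity)
  have ha1 : a 1 = γ 1 := by rw [ha 1]; norm_num [Nat.factorial]
  have hγ1 : γ 1 = p 1 := by rw [hγ 1 le_rfl]; simp
  -- main: bound each summability radius r
  rw [hρa]
  refine iSup₂_le fun r hr => le_min ?_ ?_
  · -- r ≤ ρ : compare with the p-series
    rw [hρ]
    refine le_iSup₂_of_le r ?_ le_rfl
    refine Summable.of_nonneg_of_le (fun n => ?_) (fun n => ?_) hr
    · positivity
    · have h1 : |if n = 0 then (0:ℝ) else p n / (Nat.factorial n)| ≤ a n := by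
        rcases Nat.eq_zero_or_pos n with h | h
        · subst h; simpa using ha0 0
        · have hcn : (0:ℝ) ≤ p n / (Nat.factorial n) :=
            div_nonneg (hp n h) (by positivity)
          rw [if_neg (by omega), abs_of_nonneg hcn, ha n, if_neg (by omega)]
          gcongr
          exact hγp n h
      calc |if n = 0 then (0:ℝ) else p n / (Nat.factorial n)| * (r:ℝ)^n
          ≤ a n * (r:ℝ)^n :=
            mul_le_mul_of_nonneg_right h1 (by positivity)
        _ = |a n| * (r:ℝ)^n := by rw [abs_of_nonneg (ha0 n)]
  · -- r ≤ 1/(|s| a₁)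
    have key : (|s| : ℝ) * a 1 * (r : ℝ) ≤ 1 := by
      by_contra hk
      push_neg at hk
      have hrnn : (0:ℝ) ≤ (r:ℝ) := r.coe_nonneg
      have ha1nn : (0:ℝ) ≤ a 1 := ha0 1
      have ha1pos : 0 < a 1 := by
        rcases ha1nn.lt_or_eq with h | h
        · exact h
        · rw [← h] at hk; norm_num at hk
      have hrpos : (0:ℝ) < (r:ℝ) := by
        rcases hrnn.lt_or_eq with h | h
        · exact h
        · rw [← h] at hk; norm_num at hk
      have hγ1pos : 0 < γ 1 := ha1 ▸ ha1pos
      -- eventual positivity of γ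
      have hposstep : ∀ n, 2 ≤ n → 0 < γ n → 0 < γ (n + 1) := by
        intro n hn hγn
        have h2 : (2:ℝ) ≤ (n:ℝ) := by exact_mod_cast hn
        have hc : (0:ℝ) < (|s| : ℝ) * n - s.sign := by nlinarith
        have h3 := hstep n (by omega)
        have h4 : 0 < ((|s| : ℝ) * n - s.sign) * γ n * γ 1 :=
          mul_pos (mul_pos hc hγn) hγ1pos
        linarith
      obtain ⟨M, hM2, hMpos⟩ : ∃ M, 2 ≤ M ∧ 0 < γ M := by
        rcases hcase with hne | ⟨n1, hn1, hpn1⟩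
        · refine ⟨2, le_rfl, ?_⟩
          have hc : (0:ℝ) < (|s| : ℝ) * 1 - s.sign := by
            rcases lt_trichotomy s 0 with h | h | h
            · rw [Int.sign_eq_neg_one_of_neg h]; push_cast; linarith
            · exact absurd h hs
            · have h2 : (2:ℤ) ≤ s := by omega
              have : (2:ℝ) ≤ (|s| : ℝ) := by
                have habs : |s| = s := abs_of_pos h
                have : (2:ℤ) ≤ |s| := by rw [habs]; exact h2
                exact_mod_cast this
              rw [Int.sign_eq_one_of_pos h]; push_cast; linarith
          have h3 := hstep 1 le_rfl
          norm_num at h3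
          have h4 : 0 < ((|s| : ℝ) * 1 - s.sign) * γ 1 * γ 1 :=
            mul_pos (mul_pos hc hγ1pos) hγ1pos
          norm_num at h4
          linarith
        · exact ⟨n1, hn1, lt_of_lt_of_le hpn1 (hγp n1 (by omega))⟩
      have hγpos : ∀ n, M ≤ n → 0 < γ n := by
        intro n hn
        induction n, hn using Nat.le_induction with
        | base => exact hMpos
        | succ n hn ih => exact hposstep n (le_trans hM2 hn) ih
      -- choose N for the ratio bound
      set t : ℝ := (|s| : ℝ) * a 1 * (r : ℝ) with ht
      obtain ⟨N, hN⟩ := exists_nat_ge ((1 + (r:ℝ) * a 1) / (t - 1))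
      set n₀ : ℕ := max N M with hn₀
      -- ratio bound
      have hratio : ∀ n, n₀ ≤ n → a n * (r:ℝ)^n ≤ a (n+1) * (r:ℝ)^(n+1) := by
        intro n hn
        have hnN : (N:ℝ) ≤ (n:ℝ) := by exact_mod_cast le_trans (le_max_left N M) hn
        have hn2 : 2 ≤ n := le_trans (le_trans hM2 (le_max_right N M)) hn
        have hn1 : 1 ≤ n := by omega
        have hB : (n:ℝ) + 1 ≤ (r:ℝ) * γ 1 * ((|s| : ℝ) * n - 1) := by
          have hdiv : (1 + (r:ℝ) * a 1) / (t - 1) ≤ (n:ℝ) := le_trans hN hnN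
          have ht1 : 0 < t - 1 := by linarith
          rw [div_le_iff₀ ht1] at hdiv
          rw [ht] at hdiv
          rw [← ha1]
          nlinarith
        have hA := hstep n hn1
        have hγn := hγ0 n hn1
        have hrn : (0:ℝ) ≤ (r:ℝ)^n := by positivity
        have h1 : ((n:ℝ) + 1) * (γ n * (r:ℝ)^n) ≤ γ (n+1) * (r:ℝ)^(n+1) :=
          calc ((n:ℝ) + 1) * (γ n * (r:ℝ)^n)
              ≤ ((r:ℝ) * γ 1 * ((|s| : ℝ) * n - 1)) * (γ n * (r:ℝ)^n) :=
                mul_le_mul_of_nonneg_right hB (mul_nonneg hγn hrn)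
            _ ≤ ((r:ℝ) * γ 1 * ((|s| : ℝ) * n - s.sign)) * (γ n * (r:ℝ)^n) := by
                have : (r:ℝ) * γ 1 * ((|s| : ℝ) * n - 1) ≤
                    (r:ℝ) * γ 1 * ((|s| : ℝ) * n - s.sign) := by
                  apply mul_le_mul_of_nonneg_left (by linarith)
                    (mul_nonneg hrnn hγ1pos.le)
                exact mul_le_mul_of_nonneg_right this (mul_nonneg hγn hrn)
            _ = (((|s| : ℝ) * n - s.sign) * γ n * γ 1) * (r:ℝ) * (r:ℝ)^n := by ring
            _ ≤ γ (n+1) * (r:ℝ) * (r:ℝ)^n := by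
                have := mul_le_mul_of_nonneg_right hA hrnn
                exact mul_le_mul_of_nonneg_right this hrn
            _ = γ (n+1) * (r:ℝ)^(n+1) := by rw [pow_succ]; ring
        rw [ha n, if_neg (by omega), ha (n+1), if_neg (by omega)]
        have hF : (0:ℝ) < (Nat.factorial n : ℝ) := by positivity
        have hF2 : ((Nat.factorial (n+1) : ℕ) : ℝ) = ((n:ℝ)+1) * (Nat.factorial n : ℝ) := by
          rw [Nat.factorial_succ]; push_cast; ring
        rw [div_mul_eq_mul_div, div_mul_eq_mul_div, div_le_div_iff₀ hF (by positivity)]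
        rw [hF2]
        nlinarith [mul_le_mul_of_nonneg_right h1 hF.le]
      -- monotonicity from n₀
      have hmono : ∀ n, n₀ ≤ n → a n₀ * (r:ℝ)^n₀ ≤ a n * (r:ℝ)^n := by
        intro n hn
        induction n, hn using Nat.le_induction with
        | base => exact le_rfl
        | succ n hn ih => exact le_trans ih (hratio n hn)
      have hεpos : 0 < a n₀ * (r:ℝ)^n₀ := by
        have : 0 < γ n₀ := hγpos n₀ (le_max_right N M)
        have hn₀1 : 1 ≤ n₀ := le_trans hM2 (le_max_right N M) |>.trans' (by omega)
        rw [ha n₀, if_neg (by omega)]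
        positivity
      have htend := hr.tendsto_atTop_zero
      have hev := htend.eventually_lt_const hεpos
      obtain ⟨K, hK⟩ := Filter.eventually_atTop.mp hev
      have hcontra := hK (max n₀ K) (le_max_right _ _)
      have := hmono (max n₀ K) (le_max_left _ _)
      rw [abs_of_nonneg (ha0 _)] at hcontra
      linarith
    -- conclude
    have hb : (0:ℝ) ≤ (|s| : ℝ) * a 1 := mul_nonneg (by linarith) (ha0 1)
    rw [ENNReal.le_inv_iff_mul_le]
    calc (r : ℝ≥0∞) * ENNReal.ofReal ((|s| : ℝ) * a 1)
        = ENNReal.ofReal ((r:ℝ) * ((|s| : ℝ) * a 1)) := by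
          rw [ENNReal.ofReal_mul r.coe_nonneg, ENNReal.ofReal_coe_nnreal]
      _ ≤ ENNReal.ofReal 1 := ENNReal.ofReal_le_ofReal (by linarith)
      _ = 1 := ENNReal.ofReal_one
end

section
/- The radius of convergence of A satisfies ρ_a ≥ min{ρ, 1/(|s|·a_1)} (with 1/(|s|·a_1) = ∞ when a_1 = 0). -/
/-!
With `q n = p n / n!` and `a n = γ n / n!` the recursion reads
`a n = q n + ∑ (|s| j - sign s) / (n choose j) * a j * a (n - j)`, with weights at most `|s|`.
Hence `a` is majorized by a geometric multiple of the Catalan numbers, and `A` has a positive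
radius `R`.

If `R < t < min ρ (1 / (|s| a₁))` with `t < 2 R`, put `b n = a n tⁿ`. Splitting off the term
`j = n - 1`, whose weight is at most `|s|`, the rest of the convolution is small: for
`2 ≤ k = min j (n - j)` the weight is `O(k² 2⁻ᵏ / n)`, and `∑ k² aₖ (t / 2)ᵏ < ∞`.
So `b n ≤ q n tⁿ + (|s| a₁ t + o(1)) · max_{m<n} b m`, where `q n tⁿ` is bounded as
`t < ρ`, and `|s| a₁ t < 1` makes `b` bounded, i.e. `t ≤ R`: a contradiction.
-/

open scoped BigOperators ENNReal NNReal

open Finset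

theorem seriesRadius_eq_radius_ofScalars (c : ℕ → ℝ) :
    seriesRadius c = (FormalMultilinearSeries.ofScalars ℝ c).radius := by
  have hnorm (n : ℕ) : ‖FormalMultilinearSeries.ofScalars ℝ c n‖ = |c n| := by
    rw [FormalMultilinearSeries.ofScalars_norm, Real.norm_eq_abs]
  refine le_antisymm (iSup₂_le fun r hr => ?_) (ENNReal.le_of_forall_nnreal_lt fun r hr => ?_)
  · exact FormalMultilinearSeries.le_radius_of_summable_norm _ (by simpa only [hnorm] using hr)
  · exact le_iSup₂_of_le (f := fun (r : ℝ≥0) (_ : Summable fun n => |c n| * (r : ℝ) ^ n) =>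
      (r : ℝ≥0∞)) r (by simpa only [hnorm] using
        FormalMultilinearSeries.summable_norm_mul_pow _ hr) le_rfl

theorem exists_abs_mul_pow_le_of_lt_seriesRadius {c : ℕ → ℝ} {r : ℝ≥0}
    (h : (r : ℝ≥0∞) < seriesRadius c) : ∃ C, ∀ n, |c n| * (r : ℝ) ^ n ≤ C := by
  rw [seriesRadius_eq_radius_ofScalars] at h
  obtain ⟨C, -, hC⟩ := FormalMultilinearSeries.norm_mul_pow_le_of_lt_radius _ h
  exact ⟨C, fun n => by simpa [FormalMultilinearSeries.ofScalars_norm] using hC n⟩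

theorem summable_sq_mul_abs_mul_pow_of_lt_seriesRadius {c : ℕ → ℝ} {r : ℝ≥0}
    (h : (r : ℝ≥0∞) < seriesRadius c) :
    Summable fun n : ℕ => (n : ℝ) ^ 2 * |c n| * (r : ℝ) ^ n := by
  rw [seriesRadius_eq_radius_ofScalars] at h
  obtain ⟨x, hx, C, -, hC⟩ := FormalMultilinearSeries.norm_mul_pow_le_mul_pow_of_lt_radius _ h
  have hgeom : Summable fun n : ℕ => (n : ℝ) ^ 2 * x ^ n :=
    summable_pow_mul_geometric_of_norm_lt_one 2 (by rw [Real.norm_of_nonneg hx.1.le]; exact hx.2)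
  refine .of_nonneg_of_le (fun n => by positivity) (fun n => ?_) (hgeom.mul_left C)
  have := hC n
  rw [FormalMultilinearSeries.ofScalars_norm, Real.norm_eq_abs] at this
  calc (n : ℝ) ^ 2 * |c n| * (r : ℝ) ^ n = (n : ℝ) ^ 2 * (|c n| * (r : ℝ) ^ n) := by ring
    _ ≤ (n : ℝ) ^ 2 * (C * x ^ n) := by gcongr
    _ = C * ((n : ℝ) ^ 2 * x ^ n) := by ring

theorem le_seriesRadius_of_bound {c : ℕ → ℝ} {r : ℝ≥0} (C : ℝ)
    (h : ∀ n, |c n| * (r : ℝ) ^ n ≤ C) : (r : ℝ≥0∞) ≤ seriesRadius c := by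
  rw [seriesRadius_eq_radius_ofScalars]
  exact FormalMultilinearSeries.le_radius_of_bound _ C fun n => by
    simpa [FormalMultilinearSeries.ofScalars_norm] using h n

namespace Nat

theorem two_pow_le_choose {m i : ℕ} (h : 2 * i ≤ m) : 2 ^ i ≤ m.choose i := by
  induction i generalizing m with
  | zero => simp
  | succ i ih =>
    obtain ⟨m, rfl⟩ : ∃ m', m = m' + 2 := ⟨m - 2, by omega⟩
    have h₁ := ih (m := m) (by omega)
    have h₂ : m.choose i ≤ (m + 1).choose i := choose_le_succ m i
    rw [choose_succ_succ', choose_succ_succ' m, pow_succ]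
    omega

theorem self_le_choose {n j : ℕ} (hj : 1 ≤ j) (hjn : j < n) : n ≤ n.choose j := by
  induction n generalizing j with
  | zero => omega
  | succ n ih =>
    obtain ⟨j, rfl⟩ : ∃ j', j = j' + 1 := ⟨j - 1, by omega⟩
    rcases Nat.eq_zero_or_pos j with rfl | hj
    · simp
    · have h₁ := ih (j := j) (by omega) (by omega)
      have h₂ := choose_pos (show j + 1 ≤ n by omega)
      rw [choose_succ_succ']
      omega

theorem mul_pow_le_sq_mul_choose {n k : ℕ} (hk : 2 ≤ k) (hkn : 2 * k ≤ n) :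
    n * (n - 1) * 2 ^ k ≤ 4 * k ^ 2 * n.choose k := by
  obtain ⟨i, rfl⟩ : ∃ i, k = i + 2 := ⟨k - 2, by omega⟩
  obtain ⟨m, rfl⟩ : ∃ m, n = m + 2 := ⟨n - 2, by omega⟩
  have h₁ := add_one_mul_choose_eq m i
  have h₂ := add_one_mul_choose_eq (m + 1) (i + 1)
  have h₃ := two_pow_le_choose (show 2 * i ≤ m by omega)
  have key : (m + 2) * (m + 1) * m.choose i = (m + 2).choose (i + 2) * ((i + 2) * (i + 1)) := by
    rw [mul_assoc, h₁, ← mul_assoc, h₂]; ring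
  calc (m + 2) * (m + 2 - 1) * 2 ^ (i + 2) = 4 * ((m + 2) * (m + 1) * 2 ^ i) := by
        rw [show m + 2 - 1 = m + 1 by omega]; ring
    _ ≤ 4 * ((m + 2) * (m + 1) * m.choose i) := by gcongr
    _ = 4 * ((i + 2) * (i + 1)) * (m + 2).choose (i + 2) := by rw [key]; ring
    _ ≤ 4 * (i + 2) ^ 2 * (m + 2).choose (i + 2) := by gcongr; nlinarith

end Nat

theorem catalan_le_four_pow (n : ℕ) : catalan n ≤ 4 ^ n := by
  have := succ_mul_catalan_eq_centralBinom n
  have := Nat.centralBinom_le_four_pow n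
  nlinarith

theorem catalan_pos (n : ℕ) : 0 < catalan n :=
  Nat.pos_of_ne_zero fun h => (Nat.centralBinom_pos n).ne' <| by
    rw [← succ_mul_catalan_eq_centralBinom, h, mul_zero]

theorem sum_Ico_catalan_mul_catalan_le (n : ℕ) :
    ∑ j ∈ Ico 1 n, catalan (j - 1) * catalan (n - j - 1) ≤ catalan (n - 1) := by
  rcases n with _ | _ | m
  · simp
  · simp
  rw [sum_Ico_eq_sum_range, show m + 2 - 1 = m + 1 by omega, catalan_succ,
    ← Fin.sum_univ_eq_sum_range (fun k => catalan (1 + k - 1) * catalan (m + 2 - (1 + k) - 1))]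
  refine le_of_eq (sum_congr rfl fun k _ => ?_)
  congr 2 <;> omega

noncomputable def binomWeight (S σ : ℝ) (n j : ℕ) : ℝ := (S * j - σ) / n.choose j

section binomWeight

variable {S σ : ℝ} {n j : ℕ}

theorem binomWeight_nonneg (hσ : |σ| ≤ S) (hj : 1 ≤ j) : 0 ≤ binomWeight S σ n j := by
  have hj' : (1 : ℝ) ≤ j := by exact_mod_cast hj
  have : S ≤ S * j := le_mul_of_one_le_right ((abs_nonneg σ).trans hσ) hj'
  exact div_nonneg (by linarith [le_abs_self σ]) (Nat.cast_nonneg _)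

theorem binomWeight_le (hσ : |σ| ≤ S) (hj : 1 ≤ j) (hjn : j < n) :
    binomWeight S σ n j ≤ S := by
  have hchoose : (n : ℝ) ≤ n.choose j := by exact_mod_cast Nat.self_le_choose hj hjn
  have hjn' : (j : ℝ) + 1 ≤ n := by exact_mod_cast hjn
  have hS : 0 ≤ S := (abs_nonneg σ).trans hσ
  rw [binomWeight, div_le_iff₀ (by exact_mod_cast Nat.choose_pos hjn.le)]
  nlinarith [neg_abs_le σ]

theorem binomWeight_le_of_add_two_le (hσ : |σ| ≤ S) (hj : 1 ≤ j) (hjn : j + 2 ≤ n) :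
    binomWeight S σ n j ≤
      4 * S / (n - 1) * ((j : ℝ) ^ 2 / 2 ^ j + ((n - j : ℕ) : ℝ) ^ 2 / 2 ^ (n - j)) := by
  have hS : 0 ≤ S := (abs_nonneg σ).trans hσ
  have hn : (j : ℝ) + 2 ≤ n := by exact_mod_cast hjn
  have hn1 : (0 : ℝ) < n - 1 := by linarith [(Nat.one_le_cast (α := ℝ)).2 hj]
  rcases hj.eq_or_lt with rfl | hj
  · -- `n.choose 1 = n` is small, but so is the numerator `S - σ`
    calc binomWeight S σ n 1 = (S - σ) / n := by
          rw [binomWeight, Nat.choose_one_right, Nat.cast_one, mul_one]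
      _ ≤ 2 * S / (n - 1) := by gcongr <;> linarith [neg_abs_le σ]
      _ = 4 * S / (n - 1) * ((1 : ℕ) ^ 2 / 2 ^ 1) := by ring
      _ ≤ _ := by gcongr; exact le_add_of_nonneg_right (by positivity)
  · have hnum : S * j - σ ≤ S * n := by nlinarith [neg_abs_le σ]
    suffices h : ∀ k, 2 ≤ k → 2 * k ≤ n → n.choose j = n.choose k →
        binomWeight S σ n j ≤ 4 * S / (n - 1) * ((k : ℝ) ^ 2 / 2 ^ k) by
      rcases le_total j (n - j) with hle | hle
      · refine (h j hj (by omega) rfl).trans ?_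
        gcongr
        exact le_add_of_nonneg_right (by positivity)
      · refine (h (n - j) (by omega) (by omega) (Nat.choose_symm (by omega)).symm).trans ?_
        gcongr
        exact le_add_of_nonneg_left (by positivity)
    intro k hk hkn hchoose
    have key : (n : ℝ) * (n - 1) * 2 ^ k ≤ 4 * k ^ 2 * n.choose k := by
      have := Nat.mul_pow_le_sq_mul_choose hk hkn
      rw [← Nat.cast_le (α := ℝ)] at this
      push_cast [Nat.cast_sub (show 1 ≤ n by omega)] at this
      exact this
    rw [binomWeight, hchoose, div_le_iff₀ (by exact_mod_cast Nat.choose_pos (by omega))]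
    calc S * j - σ ≤ S * n := hnum
      _ = S * ((n : ℝ) * (n - 1) * 2 ^ k) / ((n - 1) * 2 ^ k) := by field_simp
      _ ≤ S * (4 * k ^ 2 * n.choose k) / ((n - 1) * 2 ^ k) := by gcongr
      _ = 4 * S / (n - 1) * ((k : ℝ) ^ 2 / 2 ^ k) * n.choose k := by field_simp

theorem sum_Ico_binomWeight_mul_le {M W : ℝ} {a : ℕ → ℝ} (hσ : |σ| ≤ S)
    (ha : ∀ n, 0 ≤ a n) (hn : 2 ≤ n) (hM : ∀ m < n, a m ≤ M)
    (hW : ∀ F : Finset ℕ, ∑ k ∈ F, (k : ℝ) ^ 2 / 2 ^ k * a k ≤ W) :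
    ∑ j ∈ Ico 1 (n - 1), binomWeight S σ n j * a j * a (n - j) ≤
      8 * S * W * M / (n - 1) := by
  set g : ℕ → ℝ := fun k => (k : ℝ) ^ 2 / 2 ^ k * a k
  have hg (k : ℕ) : 0 ≤ g k := mul_nonneg (by positivity) (ha k)
  have hS : 0 ≤ S := (abs_nonneg σ).trans hσ
  have hn1 : (0 : ℝ) < n - 1 := by
    have : (2 : ℝ) ≤ n := by exact_mod_cast hn
    linarith
  have hM0 : 0 ≤ M := (ha 0).trans (hM 0 (by omega))
  have hreflect : ∑ j ∈ Ico 1 (n - 1), g (n - j) ≤ W := by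
    rw [sum_Ico_reflect g 1 (by omega)]
    exact hW _
  calc ∑ j ∈ Ico 1 (n - 1), binomWeight S σ n j * a j * a (n - j)
      ≤ ∑ j ∈ Ico 1 (n - 1), 4 * S / (n - 1) * M * (g j + g (n - j)) := by
        refine sum_le_sum fun j hj => ?_
        obtain ⟨hj1, hjn⟩ := mem_Ico.1 hj
        calc binomWeight S σ n j * a j * a (n - j)
            ≤ 4 * S / (n - 1) * (j ^ 2 / 2 ^ j + ((n - j : ℕ) : ℝ) ^ 2 / 2 ^ (n - j)) *
                a j * a (n - j) := by
              gcongr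
              · exact ha _
              · exact ha _
              · exact binomWeight_le_of_add_two_le hσ hj1 (by omega)
          _ = 4 * S / (n - 1) * (g j * a (n - j) + g (n - j) * a j) := by
              simp only [g]; ring
          _ ≤ 4 * S / (n - 1) * (g j * M + g (n - j) * M) := by
              gcongr
              · exact hg _
              · exact hM _ (by omega)
              · exact hg _
              · exact hM _ (by omega)
          _ = 4 * S / (n - 1) * M * (g j + g (n - j)) := by ring
    _ = 4 * S / (n - 1) * M *
          (∑ j ∈ Ico 1 (n - 1), g j + ∑ j ∈ Ico 1 (n - 1), g (n - j)) := by
        rw [← mul_sum, sum_add_distrib]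
    _ ≤ 4 * S / (n - 1) * M * (W + W) := by gcongr; exact hW _
    _ = 8 * S * W * M / (n - 1) := by ring

end binomWeight

def SolvesRecursion (S σ : ℝ) (q a : ℕ → ℝ) : Prop :=
  ∀ n, a n = q n + ∑ j ∈ Ico 1 n, binomWeight S σ n j * a j * a (n - j)

theorem solvesRecursion_div_factorial {S σ : ℝ} {p γ : ℕ → ℝ}
    (hγ : ∀ n, 1 ≤ n → γ n = p n + ∑ j ∈ Ico 1 n, (S * j - σ) * γ j * γ (n - j)) :
    SolvesRecursion S σ (fun k => if k = 0 then 0 else p k / k.factorial)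
      (fun n => if n = 0 then 0 else γ n / n.factorial) := by
  intro n
  dsimp only
  rcases Nat.eq_zero_or_pos n with rfl | hn
  · simp
  rw [if_neg hn.ne', if_neg hn.ne', hγ n hn, add_div, sum_div]
  congr 1
  refine sum_congr rfl fun j hj => ?_
  obtain ⟨hj1, hjn⟩ := mem_Ico.1 hj
  rw [if_neg (by omega), if_neg (by omega), binomWeight]
  have h := Nat.choose_mul_factorial_mul_factorial hjn.le
  rw [← h]
  push_cast
  field_simp

namespace SolvesRecursion

variable {S σ : ℝ} {q a : ℕ → ℝ}

theorem rescale (h : SolvesRecursion S σ q a) (t : ℝ) :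
    SolvesRecursion S σ (fun n => q n * t ^ n) (fun n => a n * t ^ n) := by
  intro n
  dsimp only
  rw [h n, add_mul, sum_mul]
  congr 1
  refine sum_congr rfl fun j hj => ?_
  rw [← pow_sub_mul_pow t (mem_Ico.1 hj).2.le]
  ring

theorem nonneg (hσ : |σ| ≤ S) (h : SolvesRecursion S σ q a) (hq : ∀ n, 0 ≤ q n) (n : ℕ) :
    0 ≤ a n := by
  induction n using Nat.strong_induction_on with
  | _ n ih =>
    rw [h n]
    refine add_nonneg (hq n) (sum_nonneg fun j hj => ?_)
    obtain ⟨hj1, hjn⟩ := mem_Ico.1 hj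
    exact mul_nonneg (mul_nonneg (binomWeight_nonneg hσ hj1) (ih j hjn)) (ih _ (by omega))

theorem le_catalan (hS : 0 < S) (hσ : |σ| ≤ S) (h : SolvesRecursion S σ q a)
    (hq : ∀ n, 0 ≤ q n) {c : ℝ} (hqc : ∀ n, q n ≤ c) (n : ℕ) (hn : 1 ≤ n) :
    a n ≤ (1 + 4 * S * c) ^ n * catalan (n - 1) / (2 * S) := by
  -- `K = 1 / (2 S)` solves `S K² = K / 2`, and `L = 1 + 4 S c` makes `c ≤ K L / 2`
  set L := 1 + 4 * S * c
  have hL : 1 ≤ L := by nlinarith [(hq 0).trans (hqc 0)]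
  have ha := h.nonneg hσ hq
  induction n using Nat.strong_induction_on with
  | _ n ih =>
    have hcat : (1 : ℝ) ≤ catalan (n - 1) := by exact_mod_cast catalan_pos (n - 1)
    have hqn : q n ≤ L ^ n * catalan (n - 1) / (4 * S) :=
      calc q n ≤ L / (4 * S) := by rw [le_div_iff₀ (by positivity)]; nlinarith [hqc n]
        _ ≤ L ^ n * catalan (n - 1) / (4 * S) := by
          gcongr
          calc L ≤ L ^ n := le_self_pow₀ hL (by omega)
            _ ≤ L ^ n * catalan (n - 1) := le_mul_of_one_le_right (by positivity) hcat
    have hsum : ∑ j ∈ Ico 1 n, binomWeight S σ n j * a j * a (n - j) ≤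
        L ^ n * catalan (n - 1) / (4 * S) :=
      calc ∑ j ∈ Ico 1 n, binomWeight S σ n j * a j * a (n - j)
          ≤ ∑ j ∈ Ico 1 n, S * (L ^ j * catalan (j - 1) / (2 * S)) *
              (L ^ (n - j) * catalan (n - j - 1) / (2 * S)) := by
            refine sum_le_sum fun j hj => ?_
            obtain ⟨hj1, hjn⟩ := mem_Ico.1 hj
            exact mul_le_mul (mul_le_mul (binomWeight_le hσ hj1 hjn) (ih j hjn hj1) (ha j) hS.le)
              (ih (n - j) (by omega) (by omega)) (ha _) (by positivity)
        _ = L ^ n / (4 * S) *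
              ∑ j ∈ Ico 1 n, ((catalan (j - 1) * catalan (n - j - 1) : ℕ) : ℝ) := by
            rw [mul_sum]
            refine sum_congr rfl fun j hj => ?_
            rw [← pow_mul_pow_sub L (mem_Ico.1 hj).2.le]
            push_cast
            field_simp
            ring
        _ ≤ L ^ n / (4 * S) * catalan (n - 1) := by
            gcongr
            exact_mod_cast sum_Ico_catalan_mul_catalan_le n
        _ = L ^ n * catalan (n - 1) / (4 * S) := by ring
    have hhalf : L ^ n * catalan (n - 1) / (4 * S) + L ^ n * catalan (n - 1) / (4 * S) =
        L ^ n * catalan (n - 1) / (2 * S) := by field_simp; ring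
    rw [h n]
    linarith

theorem seriesRadius_pos (hS : 0 < S) (hσ : |σ| ≤ S) (h : SolvesRecursion S σ q a)
    (hq : ∀ n, 0 ≤ q n) (hρ : 0 < seriesRadius q) : 0 < seriesRadius a := by
  obtain ⟨x, hx, hxq⟩ := ENNReal.lt_iff_exists_nnreal_btwn.1 hρ
  obtain ⟨c, hc⟩ := exists_abs_mul_pow_le_of_lt_seriesRadius hxq
  have hqx (n : ℕ) : 0 ≤ q n * (x : ℝ) ^ n := mul_nonneg (hq n) (by positivity)
  have hcat := (h.rescale x).le_catalan hS hσ hqx (c := c)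
    (fun n => by simpa only [abs_of_nonneg (hq n)] using hc n)
  set L := 1 + 4 * S * c
  have hc0 : 0 ≤ c := le_trans (by positivity) (hc 0)
  have hL : 0 < L := by positivity
  set r : ℝ≥0 := ⟨x / (4 * L), by positivity⟩
  have hr0 : 0 < r := by
    rw [← NNReal.coe_pos]
    exact div_pos (by exact_mod_cast hx) (by positivity)
  refine lt_of_lt_of_le (ENNReal.coe_pos.2 hr0)
    (le_seriesRadius_of_bound (c + 1 / (2 * S)) fun n => ?_)
  have h2S : 0 < 1 / (2 * S) := by positivity
  rw [abs_of_nonneg (h.nonneg hσ hq n), show (r : ℝ) = x / (4 * L) from rfl, div_pow,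
    ← mul_div_assoc]
  rcases Nat.eq_zero_or_pos n with rfl | hn
  · have h0 : a 0 = q 0 := by simpa using h 0
    have := hc 0
    rw [abs_of_nonneg (hq 0)] at this
    simp only [pow_zero, div_one, mul_one] at this ⊢
    linarith
  calc a n * x ^ n / (4 * L) ^ n ≤ L ^ n * catalan (n - 1) / (2 * S) / (4 * L) ^ n := by
        gcongr; exact hcat n hn
    _ ≤ L ^ n * 4 ^ n / (2 * S) / (4 * L) ^ n := by
        gcongr
        exact_mod_cast (catalan_le_four_pow _).trans (Nat.pow_le_pow_right (by norm_num) (by omega))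
    _ = 1 / (2 * S) := by rw [mul_pow]; field_simp
    _ ≤ c + 1 / (2 * S) := by linarith

theorem exists_forall_le (hσ : |σ| ≤ S) (h : SolvesRecursion S σ q a) (hq : ∀ n, 0 ≤ q n)
    {K : ℝ} (hqK : ∀ n, q n ≤ K) (ha1 : S * a 1 < 1)
    (hW : Summable fun n : ℕ => (n : ℝ) ^ 2 / 2 ^ n * a n) : ∃ M, ∀ n, a n ≤ M := by
  have ha := h.nonneg hσ hq
  set W := ∑' n : ℕ, (n : ℝ) ^ 2 / 2 ^ n * a n
  have hWF (F : Finset ℕ) : ∑ k ∈ F, (k : ℝ) ^ 2 / 2 ^ k * a k ≤ W :=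
    hW.sum_le_tsum F fun k _ => mul_nonneg (by positivity) (ha k)
  set δ := (1 - S * a 1) / 2
  have hδ : 0 < δ := by simp only [δ]; linarith
  obtain ⟨N, hN⟩ := exists_nat_gt (8 * S * W / δ)
  set M := K / δ + ∑ m ∈ range (N + 2), a m
  have hKδ : 0 ≤ K / δ := div_nonneg ((hq 0).trans (hqK 0)) hδ.le
  have hsum : 0 ≤ ∑ m ∈ range (N + 2), a m := sum_nonneg fun m _ => ha m
  have hK : K ≤ δ * M := by
    calc K = δ * (K / δ) := by field_simp
      _ ≤ δ * M := by gcongr; simp only [M]; linarith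
  refine ⟨M, fun n => ?_⟩
  induction n using Nat.strong_induction_on with
  | _ n ih =>
    by_cases hn : n < N + 2
    · have := single_le_sum (fun m _ => ha m) (mem_range.2 hn)
      simp only [M]; linarith
    -- the term `j = n - 1` is controlled by `S * a 1 < 1`, all the others by `hW`
    have hsplit : a n = q n + ∑ j ∈ Ico 1 (n - 1), binomWeight S σ n j * a j * a (n - j) +
        binomWeight S σ n (n - 1) * a (n - 1) * a 1 := by
      obtain ⟨m, rfl⟩ : ∃ m, n = m + 1 := ⟨n - 1, by omega⟩
      rw [h, sum_Ico_succ_top (by omega)]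
      simp [add_assoc]
    have hmid : ∑ j ∈ Ico 1 (n - 1), binomWeight S σ n j * a j * a (n - j) ≤ δ * M := by
      refine (sum_Ico_binomWeight_mul_le hσ ha (by omega) ih hWF).trans ?_
      have hn1 : (N : ℝ) + 1 ≤ n - 1 := by
        have : (N : ℝ) + 2 ≤ n := by exact_mod_cast not_lt.1 hn
        linarith
      rw [div_le_iff₀ (by linarith [(Nat.cast_nonneg N : (0 : ℝ) ≤ N)])]
      have : 8 * S * W ≤ δ * (n - 1) := by
        rw [div_lt_iff₀ hδ] at hN
        nlinarith
      nlinarith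
    have hedge : binomWeight S σ n (n - 1) * a (n - 1) * a 1 ≤ S * a 1 * M := by
      have hS : 0 ≤ S := (abs_nonneg σ).trans hσ
      calc binomWeight S σ n (n - 1) * a (n - 1) * a 1 ≤ S * M * a 1 :=
            mul_le_mul_of_nonneg_right (mul_le_mul (binomWeight_le hσ (by omega) (by omega))
              (ih _ (by omega)) (ha _) hS) (ha 1)
        _ = S * a 1 * M := by ring
    have hδM : S * a 1 * M = M - 2 * δ * M := by simp only [δ]; ring
    linarith [hqK n]

theorem le_seriesRadius (hσ : |σ| ≤ S) (h : SolvesRecursion S σ q a) (hq : ∀ n, 0 ≤ q n)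
    {t : ℝ≥0} (htq : (t : ℝ≥0∞) < seriesRadius q) (hta : S * a 1 * t < 1)
    (ht : ((t / 2 : ℝ≥0) : ℝ≥0∞) < seriesRadius a) :
    (t : ℝ≥0∞) ≤ seriesRadius a := by
  have ha := h.nonneg hσ hq
  obtain ⟨K, hK⟩ := exists_abs_mul_pow_le_of_lt_seriesRadius htq
  obtain ⟨M, hM⟩ := (h.rescale t).exists_forall_le hσ
    (fun n => mul_nonneg (hq n) (by positivity))
    (K := K) (fun n => by simpa only [abs_of_nonneg (hq n)] using hK n)
    (by simpa only [pow_one, mul_assoc] using hta)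
    ((summable_sq_mul_abs_mul_pow_of_lt_seriesRadius ht).congr fun n => by
      simp only [abs_of_nonneg (ha n), NNReal.coe_div, div_pow]; push_cast; ring)
  exact le_seriesRadius_of_bound M fun n => by simpa only [abs_of_nonneg (ha n)] using hM n

theorem min_le_seriesRadius (hS : 0 < S) (hσ : |σ| ≤ S) (h : SolvesRecursion S σ q a)
    (hq : ∀ n, 0 ≤ q n) (hρ : 0 < seriesRadius q) :
    min (seriesRadius q) (ENNReal.ofReal (S * a 1))⁻¹ ≤ seriesRadius a := by
  by_contra! hlt
  have hR0 := h.seriesRadius_pos hS hσ hq hρ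
  have hR : seriesRadius a < 2 * seriesRadius a := by
    rw [two_mul]
    exact ENNReal.lt_add_right (lt_top_of_lt hlt).ne hR0.ne'
  obtain ⟨t, hat, ht⟩ := ENNReal.lt_iff_exists_nnreal_btwn.1 (lt_min hlt hR)
  simp only [lt_min_iff] at ht
  obtain ⟨⟨htq, hta⟩, ht2⟩ := ht
  refine hat.not_ge (h.le_seriesRadius hσ hq htq ?_ ?_)
  · have hS1 : 0 ≤ S * a 1 := mul_nonneg hS.le (h.nonneg hσ hq 1)
    rw [ENNReal.lt_inv_iff_lt_inv, ← one_div] at hta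
    have := ENNReal.mul_lt_of_lt_div hta
    rwa [← ENNReal.ofReal_coe_nnreal, ← ENNReal.ofReal_mul hS1, ENNReal.ofReal_lt_one] at this
  · rw [ENNReal.coe_div two_ne_zero]
    exact ENNReal.div_lt_of_lt_mul (by simpa [mul_comm] using ht2)

end SolvesRecursion

theorem radius_lower_bound_general
    (s : ℤ) (hs : s ≠ 0)
    (p : ℕ → ℝ) (hp : ∀ k, 1 ≤ k → 0 ≤ p k)
    (ρ : ℝ≥0∞)
    (hρ : ρ = seriesRadius fun k => if k = 0 then 0 else p k / (Nat.factorial k))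
    (hρ0 : 0 < ρ)
    (γ : ℕ → ℝ)
    (hγ : ∀ n, 1 ≤ n → γ n = p n +
      ∑ j ∈ Finset.Ico 1 n, ((|s| : ℝ) * j - (s.sign : ℝ)) * γ j * γ (n - j))
    (a : ℕ → ℝ) (ha : ∀ n, a n = if n = 0 then 0 else γ n / (Nat.factorial n))
    (ρa : ℝ≥0∞) (hρa : ρa = seriesRadius a) :
    min ρ (ENNReal.ofReal ((|s| : ℝ) * a 1))⁻¹ ≤ ρa := by
  obtain rfl : a = _ := funext ha
  have hS : 0 < |(s : ℝ)| := abs_pos.2 (Int.cast_ne_zero.2 hs)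
  have hσ : |(s.sign : ℝ)| ≤ |(s : ℝ)| := by
    have : |(s.sign : ℝ)| = 1 := by
      rcases hs.lt_or_gt with h | h <;> simp [Int.sign_eq_neg_one_of_neg, Int.sign_eq_one_of_pos, h]
    rw [this]
    exact_mod_cast Int.one_le_abs hs
  have hq (k : ℕ) : 0 ≤ if k = 0 then 0 else p k / (Nat.factorial k : ℝ) := by
    split_ifs with hk
    · exact le_rfl
    · exact div_nonneg (hp k (Nat.one_le_iff_ne_zero.2 hk)) (Nat.cast_nonneg _)
  subst hρa hρ
  exact ((solvesRecursion_div_factorial hγ).min_le_seriesRadius hS hσ hq hρ0 :)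

/-- `ρ_a ≥ min{ρ, 1/(|s|·a_1)}` (with the convention `1/(|s|·a_1) = ∞` if `a_1 = 0`). -/
theorem radius_lower_bound
    (s : ℤ) (hs : s ≠ 0)
    (p : ℕ → ℝ) (hp : ∀ k, 1 ≤ k → 0 ≤ p k)
    (ρ : ℝ≥0∞)
    (hρ : ρ = seriesRadius fun k => if k = 0 then 0 else p k / (Nat.factorial k))
    (hρ0 : 0 < ρ)
    (hf : ∃ k, 1 ≤ k ∧ p k ≠ 0)
    (γ : ℕ → ℝ)
    (hγ : ∀ n, 1 ≤ n → γ n = p n +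
      ∑ j ∈ Finset.Ico 1 n, ((|s| : ℝ) * j - (s.sign : ℝ)) * γ j * γ (n - j))
    (a : ℕ → ℝ) (ha : ∀ n, a n = if n = 0 then 0 else γ n / (Nat.factorial n))
    (ρa : ℝ≥0∞) (hρa : ρa = seriesRadius a) :
    min ρ (ENNReal.ofReal ((|s| : ℝ) * a 1))⁻¹ ≤ ρa :=
  radius_lower_bound_general s hs p hp ρ hρ hρ0 γ hγ a ha ρa hρa
end

section
/- For every r ∈ 𝓡, the radius of convergence of A^r(x) = Σ_{n≥1} a^r_n x^n is at most min{ ρ_r, 1/(Σ_{j∈𝓡} |s_j| a^j_1) } (the second quantity interpreted as ∞ when Σ_{j∈𝓡} |s_j| a^j_1 = 0). -/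
/-!
Every term of the recursion is nonnegative, so `γ^r_{1,n} ≥ p^r(n)` and the radius of `A^r` is at
most `ρ_r`. Keeping only the `i = n` terms gives `(n + 1) a^r_{n+1} ≥ (n S - a^r_1) a^r_n` with
`S = Σ_j |s_j| a^j_1`, so `liminf a^r_{n+1} / a^r_n ≥ S` and the ratio test rules out
convergence at any `x > 1 / S`.
-/

open scoped BigOperators ENNReal NNReal

open Filter Topology

lemma seriesRadius_le_of_abs_le {c d : ℕ → ℝ} (h : ∀ n, |c n| ≤ |d n|) :
    seriesRadius d ≤ seriesRadius c :=
  iSup₂_le fun x hx => le_iSup₂_of_le (f := fun (x : ℝ≥0)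
      (_ : Summable fun n => |c n| * (x : ℝ) ^ n) => (x : ℝ≥0∞)) x
    (hx.of_nonneg_of_le (fun n => by positivity) fun n =>
      mul_le_mul_of_nonneg_right (h n) (by positivity)) le_rfl

/-- When `x S > 1`, the terms `|c n| x ^ n` eventually grow geometrically. -/
lemma seriesRadius_le_inv_of_tendsto_ratio {c b : ℕ → ℝ} {S : ℝ} (hb : Tendsto b atTop (𝓝 S))
    (hpos : ∀ᶠ n in atTop, 0 < c n) (hratio : ∀ᶠ n in atTop, b n * c n ≤ c (n + 1)) :
    seriesRadius c ≤ (ENNReal.ofReal S)⁻¹ := by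
  refine iSup₂_le fun x hx => ?_
  rw [ENNReal.le_inv_iff_mul_le, ← ENNReal.ofReal_coe_nnreal, ← ENNReal.ofReal_mul x.coe_nonneg]
  refine ENNReal.ofReal_le_one.mpr (not_lt.mp fun hxS => ?_)
  obtain ⟨q, hq1, hqS⟩ := exists_between hxS
  have hx0 : 0 < (x : ℝ) :=
    x.coe_nonneg.lt_of_ne fun hx0 => by rw [← hx0, zero_mul] at hxS; linarith
  refine not_summable_of_ratio_norm_eventually_ge hq1 ?_ ?_ hx
  · exact (hpos.mono fun n hn =>
      norm_ne_zero_iff.mpr (mul_pos (abs_pos.mpr hn.ne') (pow_pos hx0 n)).ne').frequently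
  · filter_upwards [hpos, hratio, (hb.const_mul (x : ℝ)).eventually_const_lt hqS] with n hn hbn hqb
    rw [Real.norm_of_nonneg (by positivity), Real.norm_of_nonneg (by positivity), abs_of_pos hn]
    calc q * (c n * (x : ℝ) ^ n) ≤ x * b n * (c n * (x : ℝ) ^ n) := by gcongr
      _ = x * (b n * c n) * (x : ℝ) ^ n := by ring
      _ ≤ x * c (n + 1) * (x : ℝ) ^ n := by gcongr
      _ = c (n + 1) * (x : ℝ) ^ (n + 1) := by ring
      _ ≤ |c (n + 1)| * (x : ℝ) ^ (n + 1) := by gcongr; exact le_abs_self _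

lemma tendsto_natCast_mul_sub_div_add_one (S C : ℝ) :
    Tendsto (fun n : ℕ => ((n : ℝ) * S - C) / (n + 1)) atTop (𝓝 S) := by
  have h := ((tendsto_natCast_div_add_atTop (1 : ℝ)).mul_const S).sub
    (tendsto_one_div_add_atTop_nhds_zero_nat.mul_const C)
  rw [one_mul, zero_mul, sub_zero] at h
  exact h.congr fun n => by field_simp

lemma Int.abs_mul_sub_sign_nonneg (z : ℤ) {i : ℕ} (hi : 1 ≤ i) :
    0 ≤ |(z : ℝ)| * i - z.sign := by
  have hi' : (1 : ℝ) ≤ i := by exact_mod_cast hi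
  rcases lt_trichotomy z 0 with hz | rfl | hz
  · rw [Int.sign_eq_neg_one_of_neg hz]
    push_cast
    nlinarith [abs_nonneg (z : ℝ)]
  · simp
  · rw [Int.sign_eq_one_of_pos hz, abs_of_pos (by exact_mod_cast hz)]
    push_cast
    nlinarith [show (1 : ℝ) ≤ z by exact_mod_cast hz]

def CoupledRecursion {ι : Type} [Fintype ι] [DecidableEq ι] (s : ι → ℤ) (p γ : ι → ℕ → ℝ) :
    Prop :=
  ∀ r n, 1 ≤ n → γ r n = p r n
    + (∑ i ∈ Finset.Ico 1 n, ((|s r| : ℝ) * i - ((s r).sign : ℝ)) * γ r i * γ r (n - i))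
    + ∑ j ∈ Finset.univ.erase r, ∑ i ∈ Finset.Ico 1 n, (|s j| : ℝ) * i * γ j (n - i) * γ r i

namespace CoupledRecursion

variable {ι : Type} [Fintype ι] [DecidableEq ι] {s : ι → ℤ} {p γ : ι → ℕ → ℝ}

lemma p_le_of_nonneg (h : CoupledRecursion s p γ) {r : ι} {n : ℕ} (hn : 1 ≤ n)
    (hγ : ∀ j i, 1 ≤ i → i < n → 0 ≤ γ j i) : p r n ≤ γ r n := by
  rw [h r n hn, add_assoc, le_add_iff_nonneg_right]
  refine add_nonneg (Finset.sum_nonneg fun i hi => ?_)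
    (Finset.sum_nonneg fun j _ => Finset.sum_nonneg fun i hi => ?_) <;>
  obtain ⟨hi1, hin⟩ := Finset.mem_Ico.mp hi
  · exact mul_nonneg (mul_nonneg ((s r).abs_mul_sub_sign_nonneg hi1) (hγ r i hi1 hin))
      (hγ r (n - i) (by omega) (by omega))
  · exact mul_nonneg (mul_nonneg (by positivity) (hγ j (n - i) (by omega) (by omega)))
      (hγ r i hi1 hin)

lemma pos (h : CoupledRecursion s p γ)
    (hp : ∀ r k, 1 ≤ k → 0 < p r k) (r : ι) {n : ℕ} (hn : 1 ≤ n) : 0 < γ r n := by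
  induction n using Nat.strong_induction_on generalizing r with
  | _ n ih => exact (hp r n hn).trans_le (h.p_le_of_nonneg hn fun j i hi hin => (ih i hin j hi).le)

lemma p_le (h : CoupledRecursion s p γ)
    (hp : ∀ r k, 1 ≤ k → 0 < p r k) (r : ι) {n : ℕ} (hn : 1 ≤ n) : p r n ≤ γ r n :=
  h.p_le_of_nonneg hn fun j _ hi _ => (h.pos hp j hi).le

/-- Keeping only the `i = n` terms of the recursion for `γ r (n + 1)`. -/
lemma mul_le_succ (h : CoupledRecursion s p γ)
    (hp : ∀ r k, 1 ≤ k → 0 < p r k) (r : ι) {n : ℕ} (hn : 1 ≤ n) :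
    ((n : ℝ) * ∑ j, |(s j : ℝ)| * γ j 1 - γ r 1) * γ r n ≤ γ r (n + 1) := by
  have hγ : ∀ j {i}, 1 ≤ i → 0 ≤ γ j i := fun j _ hi => (h.pos hp j hi).le
  have hmem : n ∈ Finset.Ico 1 (n + 1) := Finset.mem_Ico.mpr ⟨hn, n.lt_succ_self⟩
  have hself : (|(s r : ℝ)| * n - (s r).sign) * γ r n * γ r 1 ≤
      ∑ i ∈ Finset.Ico 1 (n + 1), (|(s r : ℝ)| * i - (s r).sign) * γ r i * γ r (n + 1 - i) := by
    simpa using Finset.single_le_sum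
      (f := fun i => (|(s r : ℝ)| * i - (s r).sign) * γ r i * γ r (n + 1 - i))
      (fun i hi => mul_nonneg (mul_nonneg ((s r).abs_mul_sub_sign_nonneg (Finset.mem_Ico.mp hi).1)
        (hγ r (Finset.mem_Ico.mp hi).1)) (hγ r (by grind))) hmem
  have hcross : ∀ j, (n : ℝ) * γ r n * (|(s j : ℝ)| * γ j 1) ≤
      ∑ i ∈ Finset.Ico 1 (n + 1), |(s j : ℝ)| * i * γ j (n + 1 - i) * γ r i := fun j =>
    (le_of_eq (by ring : _ = |(s j : ℝ)| * n * γ j 1 * γ r n)).trans <| by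
      simpa using Finset.single_le_sum
        (f := fun i => |(s j : ℝ)| * i * γ j (n + 1 - i) * γ r i)
        (fun i hi => mul_nonneg (mul_nonneg (by positivity) (hγ j (by grind)))
          (hγ r (Finset.mem_Ico.mp hi).1)) hmem
  have hsign : ((s r).sign : ℝ) ≤ 1 := by
    rcases Int.sign_trichotomy (s r) with hz | hz | hz <;> simp [hz]
  have hsign_term : 0 ≤ (1 - (s r).sign) * (γ r n * γ r 1) :=
    mul_nonneg (by linarith) (mul_nonneg (hγ r hn) (hγ r le_rfl))
  rw [h r (n + 1) (by omega), ← Finset.add_sum_erase _ _ (Finset.mem_univ r)]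
  calc _ = (|(s r : ℝ)| * n - (s r).sign) * γ r n * γ r 1
        + (n : ℝ) * γ r n * ∑ j ∈ Finset.univ.erase r, |(s j : ℝ)| * γ j 1
        - (1 - (s r).sign) * (γ r n * γ r 1) := by ring
    _ ≤ _ := by
      rw [Finset.mul_sum]
      linarith [hp r (n + 1) (by omega), Finset.sum_le_sum fun j (_ : j ∈ Finset.univ.erase r) =>
        hcross j]

end CoupledRecursion

theorem systems_radius_upper_bound_general
    (ι : Type) [Fintype ι] [DecidableEq ι]
    (s : ι → ℤ)
    (p : ι → ℕ → ℝ) (hp : ∀ r k, 1 ≤ k → 0 < p r k)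
    (ρ : ι → ℝ≥0∞)
    (hρ : ∀ r, ρ r = seriesRadius fun k => if k = 0 then 0 else p r k / (Nat.factorial k))
    (γ : ι → ℕ → ℝ)
    (hγ : ∀ r n, 1 ≤ n → γ r n = p r n
      + (∑ i ∈ Finset.Ico 1 n,
          ((|s r| : ℝ) * i - ((s r).sign : ℝ)) * γ r i * γ r (n - i))
      + ∑ j ∈ Finset.univ.erase r, ∑ i ∈ Finset.Ico 1 n,
          (|s j| : ℝ) * i * γ j (n - i) * γ r i)
    (a : ι → ℕ → ℝ) (ha : ∀ r n, a r n = if n = 0 then 0 else γ r n / (Nat.factorial n)) :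
    ∀ r, seriesRadius (a r) ≤
      min (ρ r) (ENNReal.ofReal (∑ j, (|s j| : ℝ) * a j 1))⁻¹ := by
  have hrec : CoupledRecursion s p γ := hγ
  have ha_pos : ∀ r n, 1 ≤ n → 0 < a r n := fun r n hn => by
    rw [ha, if_neg (by omega)]
    exact div_pos (hrec.pos hp r hn) (by positivity)
  intro r
  refine le_min ?_ ?_
  · rw [hρ r]
    refine seriesRadius_le_of_abs_le fun n => ?_
    rcases Nat.eq_zero_or_pos n with rfl | hn
    · simp
    rw [abs_of_pos (ha_pos r n hn), ha, if_neg hn.ne', if_neg hn.ne',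
      abs_of_pos (div_pos (hp r n hn) (by positivity))]
    gcongr
    exact hrec.p_le hp r hn
  · have hS : ∑ j, (|s j| : ℝ) * a j 1 = ∑ j, |(s j : ℝ)| * γ j 1 := by simp [ha]
    rw [hS]
    refine seriesRadius_le_inv_of_tendsto_ratio (tendsto_natCast_mul_sub_div_add_one _ (γ r 1))
      (eventually_atTop.mpr ⟨1, ha_pos r⟩) (eventually_atTop.mpr ⟨1, fun n hn => ?_⟩)
    rw [ha, ha, if_neg (by omega), if_neg (by omega), Nat.factorial_succ, Nat.cast_mul,
      div_mul_div_comm, Nat.cast_succ]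
    exact div_le_div_of_nonneg_right (hrec.mul_le_succ hp r hn) (by positivity)

/-- For every `r ∈ 𝓡`, the radius of convergence of `A^r(x) = Σ_{n≥1} a^r_n x^n` is at
most `min{ρ_r, 1/(Σ_{j∈𝓡} |s_j| a^j_1)}` (the second quantity `∞` when the sum is `0`). -/
theorem systems_radius_upper_bound
    (ι : Type) [Fintype ι] [DecidableEq ι] [Nonempty ι]
    (s : ι → ℤ) (hs : ∀ r, s r ≠ 0)
    (p : ι → ℕ → ℝ) (hp : ∀ r k, 1 ≤ k → 0 < p r k)
    (ρ : ι → ℝ≥0∞)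
    (hρ : ∀ r, ρ r = seriesRadius fun k => if k = 0 then 0 else p r k / (Nat.factorial k))
    (hρ0 : ∀ r, 0 < ρ r)
    (γ : ι → ℕ → ℝ)
    (hγ : ∀ r n, 1 ≤ n → γ r n = p r n
      + (∑ i ∈ Finset.Ico 1 n,
          ((|s r| : ℝ) * i - ((s r).sign : ℝ)) * γ r i * γ r (n - i))
      + ∑ j ∈ Finset.univ.erase r, ∑ i ∈ Finset.Ico 1 n,
          (|s j| : ℝ) * i * γ j (n - i) * γ r i)
    (a : ι → ℕ → ℝ) (ha : ∀ r n, a r n = if n = 0 then 0 else γ r n / (Nat.factorial n)) :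
    ∀ r, seriesRadius (a r) ≤
      min (ρ r) (ENNReal.ofReal (∑ j, (|s j| : ℝ) * a j 1))⁻¹ :=
  systems_radius_upper_bound_general ι s p hp ρ hρ γ hγ a ha
end

section
/- The convolution S ⋆ Y vanishes on products of counit-zero elements: (S ⋆ Y)(1) = 0, and for all a, b ∈ H with ε(a) = 0 and ε(b) = 0, one has (S ⋆ Y)(a·b) = 0. -/
/-!
Since `H` is commutative, its antipode `S` is an algebra map, so for an algebra map `g` and a
derivation `Y` the Leibniz rule survives convolution:
`(g ⋆ Y)(ab) = (g ⋆ Y)(a) (g ⋆ id)(b) + (g ⋆ id)(a) (g ⋆ Y)(b)`.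
For `g = S` we have `S ⋆ id = η ∘ ε`, hence `(S ⋆ Y)(ab) = ε(b) (S ⋆ Y)(a) + ε(a) (S ⋆ Y)(b)`,
which vanishes when `ε(a) = ε(b) = 0`; for `a = b = 1` it reads `x = x + x` with `x = (S ⋆ Y)(1)`.
-/

open Coalgebra HopfAlgebra WithConv

section

variable {R H A : Type*} [CommSemiring R] [CommSemiring H] [CommSemiring A] [Algebra R A]

lemma algHom_convMul_apply_mul_of_leibniz [Bialgebra R H] (g f : H →ₐ[R] A) (D : H →ₗ[R] A)
    (hD : ∀ a b, D (a * b) = D a * f b + f a * D b) (a b : H) :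
    (toConv g.toLinearMap * toConv D) (a * b) =
      (toConv g.toLinearMap * toConv D) a * (toConv g.toLinearMap * toConv f.toLinearMap) b +
        (toConv g.toLinearMap * toConv f.toLinearMap) a * (toConv g.toLinearMap * toConv D) b := by
  simp only [((ℛ R a).mul (ℛ R b)).convMul_apply, (ℛ R a).convMul_apply, (ℛ R b).convMul_apply,
    Coalgebra.Repr.mul_index, Finset.sum_product, Finset.sum_mul_sum, ← Finset.sum_add_distrib]
  refine Finset.sum_congr rfl fun i _ => Finset.sum_congr rfl fun j _ => ?_
  simp only [Coalgebra.Repr.mul_left, Coalgebra.Repr.mul_right, AlgHom.toLinearMap_apply, map_mul,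
    hD]
  ring

lemma antipode_convMul_derivation_apply_mul [HopfAlgebra R H] (Y : H →ₗ[R] H)
    (hY : ∀ a b, Y (a * b) = Y a * b + a * Y b) (a b : H) :
    (toConv (antipode R : H →ₗ[R] H) * toConv Y) (a * b) =
      counit (R := R) b • (toConv (antipode R : H →ₗ[R] H) * toConv Y) a +
        counit (R := R) a • (toConv (antipode R : H →ₗ[R] H) * toConv Y) b := by
  have h := algHom_convMul_apply_mul_of_leibniz (antipodeAlgHom R H) (AlgHom.id R H) Y hY a b
  rw [toLinearMap_antipodeAlgHom, AlgHom.toLinearMap_id, LinearMap.antipode_mul_id,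
    LinearMap.convOne_apply, LinearMap.convOne_apply] at h
  rw [h, Algebra.smul_def, Algebra.smul_def, ← Algebra.commutes]

end

/-- For a commutative Hopf algebra `H` over a commutative ring `R`, with antipode `S`
and an `R`-linear derivation `Y : H → H`, the convolution `S ⋆ Y = m ∘ (S ⊗ Y) ∘ Δ`
vanishes at `1` and on products of counit-zero elements. -/
theorem antipode_conv_derivation_vanishes
    (R H : Type*) [CommRing R] [CommRing H] [HopfAlgebra R H]
    (Y : H →ₗ[R] H) (hY : ∀ a b : H, Y (a * b) = Y a * b + a * Y b) :
    ((LinearMap.mul' R H) ∘ₗ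
        (TensorProduct.map (HopfAlgebra.antipode (R := R)) Y) ∘ₗ
        (Coalgebra.comul (R := R) (A := H))) 1 = 0 ∧
    ∀ a b : H, Coalgebra.counit (R := R) a = 0 → Coalgebra.counit (R := R) b = 0 →
      ((LinearMap.mul' R H) ∘ₗ
          (TensorProduct.map (HopfAlgebra.antipode (R := R)) Y) ∘ₗ
          (Coalgebra.comul (R := R) (A := H))) (a * b) = 0 := by
  -- the map in the statement is `toConv (antipode R) * toConv Y` unfolded
  have leibniz := antipode_convMul_derivation_apply_mul Y hY
  refine ⟨?_, fun a b ha hb => ?_⟩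
  · have h := leibniz 1 1
    rwa [mul_one, Bialgebra.counit_one, one_smul, left_eq_add] at h
  · have h := leibniz a b
    rwa [ha, hb, zero_smul, zero_smul, add_zero] at h
end

section
/- (i) For every r ∈ 𝓡 and every k ≥ 1, the coefficient of x^m in γ^r_k vanishes for all m < k (the lowest term of γ^r_k has order at least k). (ii) If moreover sign(s_r)·γ^r_{1,1} ≠ ℓ·Σ_{j∈𝓡} |s_j| γ^j_{1,1} for every ℓ ∈ {0,1,…,k−1}, where γ^j_{1,1} denotes the coefficient of x in γ^j_1, then the coefficient of x^k in γ^r_k is nonzero (the lowest term of γ^r_k has order exactly k). -/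
/-!
Write `θ = X · d/dX`, which multiplies the coefficient of `x^n` by `n`. If `X ∣ f`, `X ∣ g` and
`X^n ∣ h`, then `X^(n+1) ∣ f * h - g * θ h`, with coefficient of `x^(n+1)` equal to
`(f₁ - n g₁) h_n`. The recursion for `γ^r_k` is such a step with `f = sign(s_r) γ^r_1` and
`g = Σ_j |s_j| γ^j_1`, so by induction `x^k ∣ γ^r_k`, and the coefficient of `x^k` in `γ^r_k` is
`∏_{ℓ<k} (sign(s_r) γ^r_{1,1} - ℓ Σ_j |s_j| γ^j_{1,1}) / k!`.
-/

open scoped BigOperators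
open PowerSeries

namespace PowerSeries

variable {R : Type*}

theorem coeff_X_mul_derivative [CommSemiring R] (h : R⟦X⟧) (n : ℕ) :
    coeff n (X * derivative R h) = n * coeff n h := by
  cases n with
  | zero => simp
  | succ m => rw [coeff_succ_X_mul, coeff_derivative]; push_cast; ring

theorem X_pow_dvd_X_mul_derivative [CommSemiring R] {h : R⟦X⟧} {n : ℕ} (hh : X ^ n ∣ h) :
    X ^ n ∣ X * derivative R h :=
  X_pow_dvd_iff.mpr fun m hm => by
    rw [coeff_X_mul_derivative, X_pow_dvd_iff.mp hh m hm, mul_zero]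

theorem coeff_add_mul_of_X_pow_dvd [CommSemiring R] {f g : R⟦X⟧} {a b : ℕ}
    (hf : X ^ a ∣ f) (hg : X ^ b ∣ g) : coeff (a + b) (f * g) = coeff a f * coeff b g := by
  obtain ⟨f', rfl⟩ := hf
  obtain ⟨g', rfl⟩ := hg
  have hfg : X ^ a * f' * (X ^ b * g') = X ^ (a + b) * (f' * g') := by ring
  simp [hfg, coeff_X_pow_mul']

variable [CommRing R] {f g h : R⟦X⟧} {n : ℕ}

theorem X_pow_succ_dvd_mul_sub_mul_X_mul_derivative (hf : X ∣ f) (hg : X ∣ g)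
    (hh : X ^ n ∣ h) : X ^ (n + 1) ∣ f * h - g * (X * derivative R h) := by
  rw [pow_succ']
  exact dvd_sub (mul_dvd_mul hf hh) (mul_dvd_mul hg (X_pow_dvd_X_mul_derivative hh))

theorem coeff_succ_mul_sub_mul_X_mul_derivative (hf : X ∣ f) (hg : X ∣ g) (hh : X ^ n ∣ h) :
    coeff (n + 1) (f * h - g * (X * derivative R h)) =
      (coeff 1 f - n * coeff 1 g) * coeff n h := by
  rw [← pow_one X] at hf hg
  rw [add_comm, map_sub, coeff_add_mul_of_X_pow_dvd hf hh,
    coeff_add_mul_of_X_pow_dvd hg (X_pow_dvd_X_mul_derivative hh), coeff_X_mul_derivative]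
  ring

end PowerSeries

theorem gamma_k_lowest_order_general
    (ι : Type) [Fintype ι]
    (s : ι → ℤ)
    (γ : ι → ℕ → PowerSeries ℝ)
    (h0 : ∀ r, PowerSeries.constantCoeff (γ r 1) = 0)
    (hrec : ∀ r k, 2 ≤ k → γ r k =
      ((k : ℝ)⁻¹) • ((((s r).sign : ℝ)) • (γ r 1 * γ r (k - 1)) -
        (∑ j, ((|s j| : ℝ)) • γ j 1) *
          (PowerSeries.X * PowerSeries.derivative ℝ (γ r (k - 1))))) :
    (∀ r k m, 1 ≤ k → m < k → PowerSeries.coeff (R := ℝ) m (γ r k) = 0) ∧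
    (∀ r k, 1 ≤ k →
      (∀ ℓ : ℕ, ℓ < k →
        ((s r).sign : ℝ) * PowerSeries.coeff (R := ℝ) 1 (γ r 1) ≠
          (ℓ : ℝ) * ∑ j, (|s j| : ℝ) * PowerSeries.coeff (R := ℝ) 1 (γ j 1)) →
      PowerSeries.coeff (R := ℝ) k (γ r k) ≠ 0) := by
  set S := ∑ j, ((|s j| : ℝ)) • γ j 1
  have hX : ∀ r, X ∣ ((s r).sign : ℝ) • γ r 1 := fun r =>
    dvd_smul_of_dvd _ (X_dvd_iff.mpr (h0 r))
  have hXS : X ∣ S := Finset.dvd_sum fun j _ => dvd_smul_of_dvd _ (X_dvd_iff.mpr (h0 j))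
  have hstep : ∀ r k, 1 ≤ k → γ r (k + 1) = ((k + 1 : ℕ) : ℝ)⁻¹ •
      ((((s r).sign : ℝ) • γ r 1) * γ r k - S * (X * derivative ℝ (γ r k))) := by
    intro r k hk
    rw [hrec r (k + 1) (by omega), Nat.add_sub_cancel, smul_mul_assoc]
  have hdvd : ∀ r k, 1 ≤ k → X ^ k ∣ γ r k := by
    intro r
    refine Nat.le_induction (by simpa using X_dvd_iff.mpr (h0 r)) fun k hk ih => ?_
    rw [hstep r k hk]
    exact dvd_smul_of_dvd _ (X_pow_succ_dvd_mul_sub_mul_X_mul_derivative (hX r) hXS ih)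
  refine ⟨fun r k m hk hm => X_pow_dvd_iff.mp (hdvd r k hk) m hm, fun r => ?_⟩
  have hcoeff : ∀ k, 1 ≤ k → coeff (k + 1) (γ r (k + 1)) = ((k : ℝ) + 1)⁻¹ *
      (((s r).sign : ℝ) * coeff 1 (γ r 1) - k * ∑ j, (|s j| : ℝ) * coeff 1 (γ j 1)) *
        coeff k (γ r k) := by
    intro k hk
    rw [hstep r k hk, coeff_smul, coeff_succ_mul_sub_mul_X_mul_derivative (hX r) hXS (hdvd r k hk)]
    simp only [S, map_sum, coeff_smul, smul_eq_mul]
    push_cast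
    ring
  refine Nat.le_induction (fun hne => ?_) fun k hk ih hne => ?_
  · exact fun hc => hne 0 one_pos (by simp [hc])
  · rw [hcoeff k hk]
    refine mul_ne_zero (mul_ne_zero (by positivity) (sub_ne_zero.mpr (hne k (by omega)))) ?_
    exact ih fun ℓ hℓ => hne ℓ (by omega)

/-- (i) For each `r` and `k ≥ 1` the coefficient of `x^m` in `γ^r_k` vanishes for
`m < k`.  (ii) If moreover `sign(s_r)·γ^r_{1,1} ≠ ℓ·Σ_{j} |s_j| γ^j_{1,1}` for all
`ℓ ∈ {0,…,k−1}`, then the coefficient of `x^k` in `γ^r_k` is nonzero. -/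
theorem gamma_k_lowest_order
    (ι : Type) [Fintype ι] [Nonempty ι]
    (s : ι → ℤ) (hs : ∀ r, s r ≠ 0)
    (γ : ι → ℕ → PowerSeries ℝ)
    (h0 : ∀ r, PowerSeries.constantCoeff (γ r 1) = 0)
    (hrec : ∀ r k, 2 ≤ k → γ r k =
      ((k : ℝ)⁻¹) • ((((s r).sign : ℝ)) • (γ r 1 * γ r (k - 1)) -
        (∑ j, ((|s j| : ℝ)) • γ j 1) *
          (PowerSeries.X * PowerSeries.derivative ℝ (γ r (k - 1))))) :
    (∀ r k m, 1 ≤ k → m < k → PowerSeries.coeff (R := ℝ) m (γ r k) = 0) ∧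
    (∀ r k, 1 ≤ k →
      (∀ ℓ : ℕ, ℓ < k →
        ((s r).sign : ℝ) * PowerSeries.coeff (R := ℝ) 1 (γ r 1) ≠
          (ℓ : ℝ) * ∑ j, (|s j| : ℝ) * PowerSeries.coeff (R := ℝ) 1 (γ j 1)) →
      PowerSeries.coeff (R := ℝ) k (γ r k) ≠ 0) :=
  gamma_k_lowest_order_general ι s γ h0 hrec
end
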